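/- arXiv:1906.05565 — 9 statements merged into one kernel-verified Lean document; each statement's English description precedes it below -/
import Mathlib

section
/- Let G be a finite simple graph, α an integer, and A, B ⊆ V(G) vertex sets such that the induced subgraphs G[A] and G[B] are both α-robust. Then the induced subgraph G[A ∪ B] is α-robust. -/
/-- A graph is `α`-robust when it has at least `α` vertices and no vertex `v` exists
such that deleting `v` leaves a connected component with fewer than `α - 1` vertices. -/
def IsRobustGraph {V : Type*} (G : SimpleGraph V) (α : ℤ) : Prop :=
  α ≤ ((Set.univ : Set V).ncard : ℤ) ∧
  ∀ v : V, ∀ C : (G.induce {u | u ≠ v}).ConnectedComponent,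
    α - 1 ≤ (C.supp.ncard : ℤ)

open SimpleGraph

lemma robust_key {V : Type*} [Fintype V] (G : SimpleGraph V) (α : ℤ) (A S : Set V)
    (hA : IsRobustGraph (G.induce A) α) (hα : 2 ≤ α) (hAS : A ⊆ S)
    (v u : ↥S) (hu : (u : V) ∈ A) (huv : u ≠ v) :
    α - 1 ≤ ((((G.induce S).induce {x | x ≠ v}).connectedComponentMk ⟨u, huv⟩).supp.ncard : ℤ) := by
  have hA2 : 1 < A.ncard := by
    have h1 := hA.1
    rw [Set.ncard_univ, Nat.card_coe_set_eq] at h1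
    omega
  obtain ⟨w, hwu, hwne⟩ : ∃ w : ↥A, (⟨(u : V), hu⟩ : ↥A) ≠ w ∧
      ∀ x : ↥A, x ≠ w → (x : V) ≠ (v : V) := by
    by_cases hv : (v : V) ∈ A
    · refine ⟨⟨v, hv⟩, ?_, fun x hx h => hx (Subtype.ext h)⟩
      intro h
      exact huv (Subtype.ext (congrArg (Subtype.val : ↥A → V) h))
    · obtain ⟨b, hb, hbne⟩ := Set.exists_ne_of_one_lt_ncard hA2 (u : V)
      exact ⟨⟨b, hb⟩, fun h => hbne (congrArg Subtype.val h).symm,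
        fun x hx h => hv (h ▸ x.2)⟩
  set H₁ := (G.induce A).induce {x | x ≠ w} with hH₁
  set H₂ := (G.induce S).induce {x | x ≠ v} with hH₂
  let f : H₁ →g H₂ :=
    ⟨fun x => ⟨⟨((x : ↥A) : V), hAS (x : ↥A).2⟩,
        fun h => hwne x.1 x.2 (congrArg Subtype.val h)⟩,
      fun h => h⟩
  have hinj : Function.Injective f := by
    intro x y h
    apply Subtype.ext
    apply Subtype.ext
    exact congrArg (fun z : {x : ↥S // x ≠ v} => ((z : ↥S) : V)) h
  set u' : {x : ↥A // x ≠ w} := ⟨⟨(u : V), hu⟩, hwu⟩ with hu'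
  have hsub : f '' (H₁.connectedComponentMk u').supp ⊆
      (H₂.connectedComponentMk ⟨u, huv⟩).supp := by
    rintro _ ⟨x, hx, rfl⟩
    simp only [ConnectedComponent.mem_supp_iff] at hx ⊢
    have hr : H₁.Reachable x u' := ConnectedComponent.eq.mp hx
    have hr2 : H₂.Reachable (f x) (f u') := hr.map f
    have hfu : f u' = ⟨u, huv⟩ := by
      apply Subtype.ext; apply Subtype.ext; rfl
    rw [← hfu]
    exact ConnectedComponent.eq.mpr hr2
  have h1 := hA.2 w (H₁.connectedComponentMk u')
  have h2 : (f '' (H₁.connectedComponentMk u').supp).ncard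
      = (H₁.connectedComponentMk u').supp.ncard :=
    Set.ncard_image_of_injective _ hinj
  have h3 : (f '' (H₁.connectedComponentMk u').supp).ncard ≤
      (H₂.connectedComponentMk ⟨u, huv⟩).supp.ncard :=
    Set.ncard_le_ncard hsub (Set.toFinite _)
  omega

/-- If `G[A]` and `G[B]` are `α`-robust then so is `G[A ∪ B]`. -/
theorem stmt_1 {V : Type*} [Fintype V] (G : SimpleGraph V) (α : ℤ) (A B : Set V)
    (hA : IsRobustGraph (G.induce A) α) (hB : IsRobustGraph (G.induce B) α) :
    IsRobustGraph (G.induce (A ∪ B)) α := by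
  constructor
  · have h1 := hA.1
    rw [Set.ncard_univ, Nat.card_coe_set_eq] at h1 ⊢
    have h2 : A.ncard ≤ (A ∪ B).ncard :=
      Set.ncard_le_ncard Set.subset_union_left (Set.toFinite _)
    omega
  · intro v C
    by_cases hα : 2 ≤ α
    · induction C using SimpleGraph.ConnectedComponent.ind with
      | _ u =>
        obtain ⟨u', huv⟩ := u
        rcases u'.2 with hu | hu
        · exact robust_key G α A (A ∪ B) hA hα Set.subset_union_left v u' hu huv
        · exact robust_key G α B (A ∪ B) hB hα Set.subset_union_right v u' hu huv
    · have h0 : (0 : ℤ) ≤ (C.supp.ncard : ℤ) := Int.natCast_nonneg _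
      omega
end

section
/- Let G be a finite simple graph and α an integer, and suppose there exists at least one vertex set B ⊆ V(G) with G[B] α-robust. Let A be the union of all vertex sets B ⊆ V(G) for which G[B] is α-robust. Then G[A] is α-robust, and every B ⊆ V(G) with G[B] α-robust satisfies B ⊆ A; in particular A is the unique ⊆-maximal vertex set inducing an α-robust subgraph of G. -/
/-- An injective graph hom does not decrease the size of the component of a vertex. -/
lemma supp_le_of_hom {W X : Type*} [Finite X] {G : SimpleGraph W} {H : SimpleGraph X}
    (f : G →g H) (hf : Function.Injective f) (u : W) :
    ((G.connectedComponentMk u).supp.ncard : ℤ) ≤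
      ((H.connectedComponentMk (f u)).supp.ncard : ℤ) := by
  have himg : f '' (G.connectedComponentMk u).supp ⊆
      (H.connectedComponentMk (f u)).supp := by
    rintro _ ⟨x, hx, rfl⟩
    have hr : G.Reachable x u := SimpleGraph.ConnectedComponent.exact hx
    exact SimpleGraph.ConnectedComponent.sound (hr.map f)
  have h1 : (G.connectedComponentMk u).supp.ncard =
      (f '' (G.connectedComponentMk u).supp).ncard :=
    (Set.ncard_image_of_injective _ hf).symm
  have h2 := Set.ncard_le_ncard himg (Set.toFinite _)
  omega

lemma robust_comp {W : Type*} [Finite W] {H : SimpleGraph W} {α : ℤ} (h : IsRobustGraph H α)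
    (u : W) : α - 1 ≤ (((H.connectedComponentMk u).supp).ncard : ℤ) := by
  by_cases hw : ∃ w, w ∉ (H.connectedComponentMk u).supp
  · obtain ⟨w, hw⟩ := hw
    have hu : u ≠ w := by
      rintro rfl
      exact hw ((SimpleGraph.ConnectedComponent.mem_supp_iff _ _).mpr rfl)
    let f : (H.induce {x | x ≠ w}) →g H :=
      { toFun := fun x => x.1
        map_rel' := fun hab => hab }
    have hfinj : Function.Injective f := Subtype.val_injective
    have h1 := h.2 w ((H.induce {x | x ≠ w}).connectedComponentMk ⟨u, hu⟩)
    have h2 := supp_le_of_hom f hfinj (⟨u, hu⟩ : {x | x ≠ w})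
    exact h1.trans h2
  · push_neg at hw
    have he : (H.connectedComponentMk u).supp = Set.univ := Set.eq_univ_of_forall hw
    rw [he]
    linarith [h.1]

/-- If some vertex set induces an `α`-robust subgraph of `G`, then the union `A` of all
such sets induces an `α`-robust subgraph, contains every such set, and is the unique
`⊆`-maximal vertex set inducing an `α`-robust subgraph. -/
theorem stmt_2 {V : Type*} [Fintype V] (G : SimpleGraph V) (α : ℤ)
    (h : ∃ B : Set V, IsRobustGraph (G.induce B) α) :
    IsRobustGraph (G.induce (⋃ B ∈ {B : Set V | IsRobustGraph (G.induce B) α}, B)) α ∧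
    (∀ B : Set V, IsRobustGraph (G.induce B) α →
      B ⊆ ⋃ B ∈ {B : Set V | IsRobustGraph (G.induce B) α}, B) ∧
    (∀ A : Set V, IsRobustGraph (G.induce A) α →
      (∀ B : Set V, IsRobustGraph (G.induce B) α → B ⊆ A) →
      A = ⋃ B ∈ {B : Set V | IsRobustGraph (G.induce B) α}, B) := by
  set A : Set V := ⋃ B ∈ {B : Set V | IsRobustGraph (G.induce B) α}, B with hA
  have hsub : ∀ B : Set V, IsRobustGraph (G.induce B) α → B ⊆ A := by
    intro B hB
    intro x hx
    rw [hA]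
    exact Set.mem_biUnion (show B ∈ {B : Set V | IsRobustGraph (G.induce B) α} from hB) hx
  have hmem : ∀ x : V, x ∈ A → ∃ B : Set V, IsRobustGraph (G.induce B) α ∧ x ∈ B := by
    intro x hx
    rw [hA] at hx
    simpa using hx
  have hrob : IsRobustGraph (G.induce A) α := by
    constructor
    · obtain ⟨B, hB⟩ := h
      have h1 : α ≤ (B.ncard : ℤ) := by
        have := hB.1
        rwa [Set.ncard_univ, Nat.card_coe_set_eq] at this
      have h2 : B.ncard ≤ A.ncard := Set.ncard_le_ncard (hsub B hB) A.toFinite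
      rw [Set.ncard_univ, Nat.card_coe_set_eq]
      omega
    · intro v C
      obtain ⟨u, rfl⟩ := C.exists_rep
      obtain ⟨B, hB, huB⟩ := hmem u.1.1 u.1.2
      by_cases hvB : (v : V) ∈ B
      · -- v lies in B; use robustness of B at v
        let vB : ↑B := ⟨(v : V), hvB⟩
        let K := (G.induce B).induce {x | x ≠ vB}
        let f : K →g ((G.induce A).induce {x | x ≠ v}) :=
          { toFun := fun x => ⟨⟨x.1.1, hsub B hB x.1.2⟩, by
              intro e
              have h3 : (x.1.1 : V) = (v : V) := congrArg (fun y => (y.1 : V)) e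
              exact x.2 (Subtype.ext h3)⟩
            map_rel' := fun hab => hab }
        have hfinj : Function.Injective f := by
          intro a b hab
          have h3 : (a.1.1 : V) = (b.1.1 : V) := congrArg (fun y => (y.1.1 : V)) hab
          exact Subtype.ext (Subtype.ext h3)
        have hune : (⟨u.1.1, huB⟩ : ↑B) ≠ vB := by
          intro e
          have h3 : (u.1.1 : V) = (v : V) := congrArg (fun y => (y.1 : V)) e
          exact u.2 (Subtype.ext h3)
        have h1 := hB.2 vB (K.connectedComponentMk ⟨⟨u.1.1, huB⟩, hune⟩)
        have h2 := supp_le_of_hom f hfinj (⟨⟨u.1.1, huB⟩, hune⟩ : {x : ↑B | x ≠ vB})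
        have hfu : f ⟨⟨u.1.1, huB⟩, hune⟩ = u := by
          apply Subtype.ext; apply Subtype.ext; rfl
        rw [hfu] at h2
        exact h1.trans h2
      · -- v not in B; every component of G.induce B is large
        let g : (G.induce B) →g ((G.induce A).induce {x | x ≠ v}) :=
          { toFun := fun x => ⟨⟨x.1, hsub B hB x.2⟩, by
              intro e
              have h3 : (x.1 : V) = (v : V) := congrArg (fun y => (y.1 : V)) e
              exact hvB (h3 ▸ x.2)⟩
            map_rel' := fun hab => hab }
        have hginj : Function.Injective g := by
          intro a b hab
          have h3 : (a.1 : V) = (b.1 : V) := congrArg (fun y => (y.1.1 : V)) hab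
          exact Subtype.ext h3
        have h1 := robust_comp hB (⟨u.1.1, huB⟩ : ↑B)
        have h2 := supp_le_of_hom g hginj (⟨u.1.1, huB⟩ : ↑B)
        have hgu : g ⟨u.1.1, huB⟩ = u := by
          apply Subtype.ext; apply Subtype.ext; rfl
        rw [hgu] at h2
        exact h1.trans h2
  refine ⟨hrob, hsub, ?_⟩
  intro A' hA' hmax
  apply Set.Subset.antisymm (hsub A' hA')
  intro x hx
  obtain ⟨B, hB, hxB⟩ := hmem x hx
  exact hmax B hB hxB
end

section
/- Let H be an α-robust finite simple graph and let φ be a minimal H-model in a finite simple graph G. Then the induced subgraph G[φ(V(H))], where φ(V(H)) denotes the union of all branch sets of φ, is α-robust. -/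
/-- An `H`-model in `G`: branch sets `φ v ⊆ V(G)` inducing connected subgraphs,
pairwise disjoint, with an edge of `G` between the branch sets of adjacent vertices of `H`. -/
def IsMinorModel {V W : Type*} (G : SimpleGraph V) (H : SimpleGraph W)
    (φ : W → Set V) : Prop :=
  (∀ v : W, (G.induce (φ v)).Connected) ∧
  (∀ u v : W, H.Adj u v → ∃ u' ∈ φ u, ∃ v' ∈ φ v, G.Adj u' v') ∧
  (∀ u v : W, u ≠ v → Disjoint (φ u) (φ v))

/-- `H` is a minor of `G` (`H ⪯ G`) if an `H`-model in `G` exists. -/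
def IsMinorOf {V W : Type*} (H : SimpleGraph W) (G : SimpleGraph V) : Prop :=
  ∃ φ : W → Set V, IsMinorModel G H φ

/-- A minimal `H`-model in `G`: no `H`-model is obtained by shrinking some branch set. -/
def IsMinimalMinorModel {V W : Type*} (G : SimpleGraph V) (H : SimpleGraph W)
    (φ : W → Set V) : Prop :=
  IsMinorModel G H φ ∧
  ¬ ∃ φ' : W → Set V, IsMinorModel G H φ' ∧ (∀ v, φ' v ⊆ φ v) ∧ (∃ u, φ' u ⊂ φ u)

open SimpleGraph in
lemma model_reach {V : Type*} (G : SimpleGraph V) (S : Set V) (T : Set ↥S)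
    (A : Set V) (h : ∀ p, p ∈ A → ∃ hS : p ∈ S, (⟨p, hS⟩ : ↥S) ∈ T)
    {a b : ↥A} (hr : (G.induce A).Reachable a b)
    (haS : (a : V) ∈ S) (haT : (⟨(a : V), haS⟩ : ↥S) ∈ T)
    (hbS : (b : V) ∈ S) (hbT : (⟨(b : V), hbS⟩ : ↥S) ∈ T) :
    ((G.induce S).induce T).Reachable ⟨⟨a, haS⟩, haT⟩ ⟨⟨b, hbS⟩, hbT⟩ := by
  let F : G.induce A →g (G.induce S).induce T :=
    ⟨fun p => ⟨⟨p.1, (h p.1 p.2).choose⟩, (h p.1 p.2).choose_spec⟩, fun hadj => hadj⟩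
  have h2 := hr.map F
  have ea : F a = ⟨⟨(a : V), haS⟩, haT⟩ := Subtype.ext (Subtype.ext rfl)
  have eb : F b = ⟨⟨(b : V), hbS⟩, hbT⟩ := Subtype.ext (Subtype.ext rfl)
  rwa [ea, eb] at h2


open SimpleGraph

/-- If `H` is `α`-robust and `φ` is a minimal `H`-model in `G`, then the subgraph of `G`
induced by the union of all branch sets of `φ` is `α`-robust. -/
theorem stmt_3 {V W : Type*} [Fintype V] [Fintype W]
    (G : SimpleGraph V) (H : SimpleGraph W) (α : ℤ)
    (hH : IsRobustGraph H α)
    (φ : W → Set V) (hφ : IsMinimalMinorModel G H φ) :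
    IsRobustGraph (G.induce (⋃ v : W, φ v)) α := by
  classical
  obtain ⟨⟨hconn, hedge, hdisj⟩, hmin⟩ := hφ
  set S : Set V := ⋃ v : W, φ v with hSdef
  have hsub : ∀ v : W, φ v ⊆ S := fun v => Set.subset_iUnion φ v
  have hne : ∀ v : W, (φ v).Nonempty := fun v => by
    obtain ⟨p⟩ := (hconn v).nonempty
    exact ⟨p.1, p.2⟩
  set f : W → V := fun v => (hne v).choose with hfdef
  have hfmem : ∀ v : W, f v ∈ φ v := fun v => (hne v).choose_spec
  have hfinj : Function.Injective f := by
    intro a b hab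
    by_contra hab'
    refine Set.disjoint_left.mp (hdisj a b hab') (hfmem a) ?_
    rw [hab]; exact hfmem b
  constructor
  · have h1 : (Set.univ : Set W).ncard ≤ (Set.univ : Set ↥S).ncard := by
      apply Set.ncard_le_ncard_of_injOn (fun v : W => (⟨f v, hsub v (hfmem v)⟩ : ↥S))
      · intro a _; exact Set.mem_univ _
      · intro a _ b _ hab
        exact hfinj (congrArg Subtype.val hab)
    calc α ≤ ((Set.univ : Set W).ncard : ℤ) := hH.1
      _ ≤ _ := by exact_mod_cast h1
  intro x₀ C
  obtain ⟨w, hxw⟩ := Set.mem_iUnion.mp x₀.2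
  -- the vertex-level set of the component C
  set Cset : Set V := {p | ∃ (hpS : p ∈ S) (hpx : (⟨p, hpS⟩ : ↥S) ∈ {u : ↥S | u ≠ x₀}),
      ((G.induce S).induce {u : ↥S | u ≠ x₀}).connectedComponentMk ⟨⟨p, hpS⟩, hpx⟩ = C}
    with hCsetdef
  have adjC : ∀ p q : V, p ∈ Cset → ∀ hqS : q ∈ S, q ≠ (x₀ : V) → G.Adj q p → q ∈ Cset := by
    intro p q hp hqS hqx hadj
    obtain ⟨hpS, hpx, hpC⟩ := hp
    have hqx' : (⟨q, hqS⟩ : ↥S) ∈ {u : ↥S | u ≠ x₀} :=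
      fun h => hqx (congrArg Subtype.val h)
    refine ⟨hqS, hqx', ?_⟩
    have hadj' : ((G.induce S).induce {u : ↥S | u ≠ x₀}).Adj ⟨⟨q, hqS⟩, hqx'⟩
        ⟨⟨p, hpS⟩, hpx⟩ := hadj
    exact (ConnectedComponent.sound hadj'.reachable).trans hpC
  have key : ∀ t : W, t ≠ w → ∀ p ∈ φ t, p ∈ Cset → φ t ⊆ Cset := by
    intro t ht p hp hpC q hq
    obtain ⟨hpS, hpx, hpCC⟩ := hpC
    have hmem : ∀ r, r ∈ φ t → ∃ hS : r ∈ S, (⟨r, hS⟩ : ↥S) ∈ {u : ↥S | u ≠ x₀} := by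
      intro r hr
      refine ⟨hsub t hr, fun h => ?_⟩
      have hrx : r = (x₀ : V) := congrArg Subtype.val h
      refine Set.disjoint_left.mp (hdisj t w ht) ?_ hxw
      rw [← hrx]; exact hr
    have hqS : q ∈ S := hsub t hq
    have hqT : (⟨q, hqS⟩ : ↥S) ∈ {u : ↥S | u ≠ x₀} := (hmem q hq).choose_spec
    have hr := (hconn t).preconnected (⟨q, hq⟩ : ↥(φ t)) ⟨p, hp⟩
    have hreach := model_reach G S {u : ↥S | u ≠ x₀} (φ t) hmem hr hqS hqT hpS hpx
    exact ⟨hqS, hqT, (ConnectedComponent.sound hreach).trans hpCC⟩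
  by_cases hcase : ∀ p ∈ Cset, p ∈ φ w
  · -- Case 2: C lies inside φ w; contradict minimality
    exfalso
    have hxC : (x₀ : V) ∉ Cset := by
      rintro ⟨hS, hx, -⟩
      exact hx (Subtype.ext rfl)
    set A : Set V := φ w \ Cset with hAdef
    have hxA : (x₀ : V) ∈ A := ⟨hxw, hxC⟩
    have notC_of_adj : ∀ s : W, s ≠ w → ∀ p q : V, p ∈ Cset → q ∈ φ s → G.Adj q p → False := by
      intro s hs p q hpC hq hadj
      have hqx : q ≠ (x₀ : V) := by
        intro h
        refine Set.disjoint_left.mp (hdisj s w hs) ?_ hxw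
        rw [← h]; exact hq
      have hqC := adjC p q hpC (hsub s hq) hqx hadj
      exact Set.disjoint_left.mp (hdisj s w hs) hq (hcase q hqC)
    have walkrec : ∀ (a b : ↥(φ w)) (pw : (G.induce (φ w)).Walk a b)
        (ha : (a : V) ∉ Cset), (b : V) = (x₀ : V) →
        (G.induce A).Reachable ⟨(a : V), a.2, ha⟩ ⟨(x₀ : V), hxA⟩ := by
      intro a b pw
      induction pw with
      | @nil a =>
        intro ha hb
        have : (⟨(a : V), a.2, ha⟩ : ↥A) = ⟨(x₀ : V), hxA⟩ := Subtype.ext hb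
        rw [this]
      | @cons a c b h q ih =>
        intro ha hb
        by_cases hc : (c : V) ∈ Cset
        · have hax : (a : V) = (x₀ : V) := by
            by_contra hax
            exact ha (adjC (c : V) (a : V) hc (hsub w a.2) hax h)
          have : (⟨(a : V), a.2, ha⟩ : ↥A) = ⟨(x₀ : V), hxA⟩ := Subtype.ext hax
          rw [this]
        · have step : (G.induce A).Adj ⟨(a : V), a.2, ha⟩ ⟨(c : V), c.2, hc⟩ := h
          exact step.reachable.trans (ih hc hb)
    have hAconn : (G.induce A).Connected := by
      rw [connected_iff]
      refine ⟨fun a b => ?_, ⟨⟨(x₀ : V), hxA⟩⟩⟩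
      have ra : (G.induce A).Reachable a ⟨(x₀ : V), hxA⟩ := by
        obtain ⟨pw⟩ := (hconn w).preconnected ⟨(a : V), a.2.1⟩ ⟨(x₀ : V), hxw⟩
        have h2 := walkrec _ _ pw a.2.2 rfl
        convert h2 using 2
      have rb : (G.induce A).Reachable b ⟨(x₀ : V), hxA⟩ := by
        obtain ⟨pw⟩ := (hconn w).preconnected ⟨(b : V), b.2.1⟩ ⟨(x₀ : V), hxw⟩
        have h2 := walkrec _ _ pw b.2.2 rfl
        convert h2 using 2
      exact ra.trans rb.symm
    have hsub' : ∀ t, Function.update φ w A t ⊆ φ t := by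
      intro t
      by_cases ht : t = w
      · subst ht; rw [Function.update_self]; exact Set.diff_subset
      · rw [Function.update_of_ne ht]
    refine hmin ⟨Function.update φ w A, ⟨?_, ?_, ?_⟩, hsub', ⟨w, ?_⟩⟩
    · intro t
      by_cases ht : t = w
      · subst ht; rw [Function.update_self]; exact hAconn
      · rw [Function.update_of_ne ht]; exact hconn t
    · intro u v huv
      obtain ⟨p, hp, q, hq, hadj⟩ := hedge u v huv
      refine ⟨p, ?_, q, ?_, hadj⟩
      · by_cases hu : u = w
        · subst hu
          rw [Function.update_self]
          exact ⟨hp, fun hpC => notC_of_adj v huv.ne' p q hpC hq hadj.symm⟩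
        · rw [Function.update_of_ne hu]; exact hp
      · by_cases hv : v = w
        · subst hv
          rw [Function.update_self]
          exact ⟨hq, fun hqC => notC_of_adj u huv.ne q p hqC hp hadj⟩
        · rw [Function.update_of_ne hv]; exact hq
    · intro u v huv
      exact (hdisj u v huv).mono (hsub' u) (hsub' v)
    · rw [Function.update_self]
      rw [Set.ssubset_iff_of_subset Set.diff_subset]
      obtain ⟨z, hz⟩ := C.exists_rep
      have hzC : ((z : ↥S) : V) ∈ Cset := ⟨(z : ↥S).2, z.2, hz⟩
      exact ⟨((z : ↥S) : V), hcase _ hzC, fun hmem => hmem.2 hzC⟩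
  · -- Case 1: C meets another branch set
    push_neg at hcase
    obtain ⟨p₀, hp₀C, hp₀w⟩ := hcase
    obtain ⟨hp₀S, hp₀x, hp₀mk⟩ := id hp₀C
    obtain ⟨u, hu⟩ := Set.mem_iUnion.mp hp₀S
    have hu_ne : u ≠ w := fun h => hp₀w (h ▸ hu)
    have φu_sub : φ u ⊆ Cset := key u hu_ne p₀ hu hp₀C
    have hstep : ∀ t s : W, s ≠ w → H.Adj t s → φ t ⊆ Cset → φ s ⊆ Cset := by
      intro t s hs hadj hsub'
      obtain ⟨p, hp, q, hq, hpq⟩ := hedge t s hadj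
      have hqx : q ≠ (x₀ : V) := by
        intro h
        refine Set.disjoint_left.mp (hdisj s w hs) ?_ hxw
        rw [← h]; exact hq
      exact key s hs q hq (adjC p q (hsub' hp) (hsub s hq) hqx hpq.symm)
    have hwalkH : ∀ (a b : ↥({t : W | t ≠ w}))
        (pw : (H.induce {t : W | t ≠ w}).Walk a b),
        φ (a : W) ⊆ Cset → φ (b : W) ⊆ Cset := by
      intro a b pw
      induction pw with
      | nil => exact id
      | @cons a c b h q ih =>
        exact fun ha => ih (hstep (a : W) (c : W) c.2 h ha)
    set D := (H.induce {t : W | t ≠ w}).connectedComponentMk ⟨u, hu_ne⟩ with hDdef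
    have hDsub : ∀ t ∈ D.supp, φ ((t : ↥({t : W | t ≠ w})) : W) ⊆ Cset := by
      intro t ht
      have hmk : (H.induce {t : W | t ≠ w}).connectedComponentMk t = D := ht
      have hre : (H.induce {t : W | t ≠ w}).Reachable ⟨u, hu_ne⟩ t :=
        ConnectedComponent.eq.mp (hDdef ▸ hmk.symm)
      obtain ⟨pw⟩ := hre
      exact hwalkH _ _ pw φu_sub
    have hinj2 : Function.Injective
        (fun z : ↥({u : ↥S | u ≠ x₀}) => ((z : ↥S) : V)) :=
      fun a b hab => Subtype.ext (Subtype.ext hab)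
    have hcard : D.supp.ncard ≤ C.supp.ncard := by
      have h1 : D.supp.ncard ≤
          ((fun z : ↥({u : ↥S | u ≠ x₀}) => ((z : ↥S) : V)) '' C.supp).ncard := by
        refine Set.ncard_le_ncard_of_injOn (fun t => f (t : W)) ?_ ?_ (Set.toFinite _)
        · intro t ht
          have hm : f (t : W) ∈ Cset := hDsub t ht (hfmem (t : W))
          obtain ⟨hS', hx', hmk⟩ := hm
          exact ⟨⟨⟨f (t : W), hS'⟩, hx'⟩, hmk, rfl⟩
        · intro a _ b _ hab
          exact Subtype.ext (hfinj hab)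
      rwa [Set.ncard_image_of_injective _ hinj2] at h1
    calc α - 1 ≤ (D.supp.ncard : ℤ) := hH.2 w D
      _ ≤ _ := by exact_mod_cast hcard
end

section
/- Let φ be a minimal H-model in a finite simple graph G, let v ∈ V(H) with |φ(v)| ≥ 2, and let T be a spanning tree of the induced subgraph G[φ(v)]. Then for every leaf p of T there exists a neighbor u of v in H such that p is the only vertex of φ(v) that has a neighbor in φ(u) in G; consequently T has at most deg_H(v) leaves. -/
lemma two_nb {X : Type*} {T : SimpleGraph X} {b p : X} :
    ∀ {a : X} (w : T.Walk a b), w.IsPath → p ≠ a → p ≠ b → p ∈ w.support →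
      ∃ c d, c ≠ d ∧ T.Adj p c ∧ T.Adj p d := by
  intro a w
  induction w with
  | nil => intro _ hpa _ hs; simp at hs; exact absurd hs hpa
  | @cons a c b h w' ih =>
    intro hw hpa hpb hs
    rw [SimpleGraph.Walk.support_cons, List.mem_cons] at hs
    rcases hs with h1 | hs
    · exact absurd h1 hpa
    rcases (SimpleGraph.Walk.cons_isPath_iff _ _).mp hw with ⟨hw', hna⟩
    by_cases hcp : c = p
    · subst hcp
      cases w' with
      | nil => exact absurd rfl hpb
      | @cons _ d _ h2 w'' =>
        refine ⟨a, d, ?_, h.symm, h2⟩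
        intro had; subst had
        exact hna (by simp [SimpleGraph.Walk.support_cons])
    · exact ih hw' (fun he => hcp he.symm) hpb hs

lemma lift_reach {V : Type*} {G : SimpleGraph V} {s : Set V} {T : SimpleGraph ↥s}
    (hle : T ≤ G.induce s) (p : ↥s) :
    ∀ {x y : ↥s} (w : T.Walk x y), p ∉ w.support →
      ∀ (hx : (x : V) ∈ s \ {(p : V)}) (hy : (y : V) ∈ s \ {(p : V)}),
      (G.induce (s \ {(p : V)})).Reachable ⟨x, hx⟩ ⟨y, hy⟩ := by
  intro x y w
  induction w with
  | nil => intro _ hx hy; exact SimpleGraph.Reachable.refl _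
  | @cons a c b h w' ih =>
    intro hp hx hy
    rw [SimpleGraph.Walk.support_cons, List.mem_cons] at hp
    push_neg at hp
    have hcp : c ≠ p := fun he => hp.2 (he ▸ w'.start_mem_support)
    have hc : (c : V) ∈ s \ {(p : V)} := ⟨c.2, fun he => hcp (Subtype.ext he)⟩
    have hadj : G.Adj (a : V) (c : V) := hle h
    have : (G.induce (s \ {(p : V)})).Adj ⟨a, hx⟩ ⟨c, hc⟩ := hadj
    exact this.reachable.trans (ih hp.2 hc hy)



/-- For a minimal `H`-model `φ` in `G`, a vertex `v` of `H` with `|φ(v)| ≥ 2`, and a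
spanning tree `T` of `G[φ(v)]`: every leaf `p` of `T` admits a neighbor `u` of `v` in `H`
such that `p` is the only vertex of `φ(v)` with a neighbor in `φ(u)`; consequently `T`
has at most `deg_H(v)` leaves. -/
theorem stmt_4 {V W : Type*} [Fintype V] [Fintype W]
    (G : SimpleGraph V) (H : SimpleGraph W)
    (φ : W → Set V) (hφ : IsMinimalMinorModel G H φ)
    (v : W) (hv : 2 ≤ (φ v).ncard)
    (T : SimpleGraph ↥(φ v)) (hle : T ≤ G.induce (φ v)) (hT : T.IsTree) :
    (∀ p : ↥(φ v), (T.neighborSet p).ncard ≤ 1 →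
      ∃ u : W, H.Adj v u ∧ (∃ w ∈ φ u, G.Adj ↑p w) ∧
        (∀ q : ↥(φ v), (∃ w ∈ φ u, G.Adj ↑q w) → q = p)) ∧
    {p : ↥(φ v) | (T.neighborSet p).ncard ≤ 1}.ncard ≤ (H.neighborSet v).ncard := by
  classical
  have part1 : ∀ p : ↥(φ v), (T.neighborSet p).ncard ≤ 1 →
      ∃ u : W, H.Adj v u ∧ (∃ w ∈ φ u, G.Adj ↑p w) ∧
        (∀ q : ↥(φ v), (∃ w ∈ φ u, G.Adj ↑q w) → q = p) := by
    intro p hp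
    by_contra hcon
    push_neg at hcon
    -- for every H-neighbor u of v, some q ≠ p in φ v has a G-neighbor in φ u
    have claim : ∀ u : W, H.Adj v u →
        ∃ q : ↥(φ v), q ≠ p ∧ ∃ w ∈ φ u, G.Adj ↑q w := by
      intro u hu
      obtain ⟨x, hx, w, hw, hxw⟩ := hφ.1.2.1 v u hu
      by_cases hpw : ∃ w ∈ φ u, G.Adj (↑p : V) w
      · obtain ⟨q, hq, hqp⟩ := hcon u hu hpw
        exact ⟨q, hqp, hq⟩
      · refine ⟨⟨x, hx⟩, fun he => hpw ⟨w, hw, ?_⟩, w, hw, hxw⟩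
        rw [← he]; exact hxw
    -- the shrunk branch sets
    set φ' : W → Set V := Function.update φ v (φ v \ {(p : V)}) with hφ'
    have hsub : ∀ w, φ' w ⊆ φ w := by
      intro w
      by_cases hwv : w = v
      · subst hwv; simp [hφ']
      · simp [hφ', Function.update_of_ne hwv]
    have hne : (φ v \ {(p : V)}).Nonempty := by
      obtain ⟨a, b, ha, hb, hab⟩ :=
        (Set.one_lt_ncard_iff (Set.toFinite _)).mp (by omega : 1 < (φ v).ncard)
      by_cases hap : a = (p : V)
      · subst hap
        exact ⟨b, hb, fun h => hab (Set.mem_singleton_iff.mp h).symm⟩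
      · exact ⟨a, ha, by simp [hap]⟩
    have hconn : (G.induce (φ v \ {(p : V)})).Connected := by
      rw [SimpleGraph.connected_iff]
      refine ⟨?_, ⟨⟨hne.choose, hne.choose_spec⟩⟩⟩
      rintro ⟨a, ha⟩ ⟨b, hb⟩
      obtain ⟨w⟩ := hT.isConnected ⟨a, ha.1⟩ ⟨b, hb.1⟩
      have hps : p ∉ w.toPath.1.support := by
        intro hmem
        have hpa : p ≠ ⟨a, ha.1⟩ := fun he => ha.2 (by rw [he]; exact rfl)
        have hpb : p ≠ ⟨b, hb.1⟩ := fun he => hb.2 (by rw [he]; exact rfl)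
        obtain ⟨c, d, hcd, hc, hd⟩ := two_nb w.toPath.1 w.toPath.2 hpa hpb hmem
        have h2 : ({c, d} : Set ↥(φ v)).ncard ≤ (T.neighborSet p).ncard :=
          Set.ncard_le_ncard (by
            rintro x (rfl | rfl)
            · exact hc
            · exact hd) (Set.toFinite _)
        rw [Set.ncard_pair hcd] at h2
        omega
      exact lift_reach hle p w.toPath.1 hps ha hb
    refine hφ.2 ⟨φ', ⟨?_, ?_, ?_⟩, hsub, v, ?_⟩
    · intro w
      by_cases hwv : w = v
      · subst hwv
        rw [hφ', Function.update_self]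
        exact hconn
      · rw [hφ', Function.update_of_ne hwv]
        exact hφ.1.1 w
    · intro u u' huu'
      by_cases hu : u = v
      · subst hu
        have hu' : u' ≠ u := fun he => (H.irrefl (he ▸ huu'))
        obtain ⟨q, hqp, w, hw, hqw⟩ := claim u' huu'
        refine ⟨↑q, ?_, w, ?_, hqw⟩
        · simp only [hφ', Function.update_self]
          exact ⟨q.2, fun he => hqp (Subtype.ext he)⟩
        · simp [hφ', Function.update_of_ne (fun he => hu' (he))]
          exact hw
      · by_cases hu2 : u' = v
        · subst hu2
          obtain ⟨q, hqp, w, hw, hqw⟩ := claim u huu'.symm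
          refine ⟨w, ?_, ↑q, ?_, hqw.symm⟩
          · simp [hφ', Function.update_of_ne hu]; exact hw
          · simp only [hφ', Function.update_self]
            exact ⟨q.2, fun he => hqp (Subtype.ext he)⟩
        · obtain ⟨x, hx, y, hy, hxy⟩ := hφ.1.2.1 u u' huu'
          exact ⟨x, by simpa [hφ', Function.update_of_ne hu] using hx,
                 y, by simpa [hφ', Function.update_of_ne hu2] using hy, hxy⟩
    · intro u u' huu'
      exact (hφ.1.2.2 u u' huu').mono (hsub u) (hsub u')
    · simp only [hφ', Function.update_self]
      exact Set.sdiff_singleton_ssubset.mpr p.2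
  refine ⟨part1, ?_⟩
  choose u hu1 hu2 hu3 using part1
  have hW : Nonempty W := ⟨v⟩
  set f : ↥(φ v) → W := fun p =>
    if h : (T.neighborSet p).ncard ≤ 1 then u p h else Classical.arbitrary W with hf
  refine Set.ncard_le_ncard_of_injOn f ?_ ?_ (Set.toFinite _)
  · intro p hp
    simp only [Set.mem_setOf_eq] at hp
    simp only [hf, dif_pos hp]
    exact hu1 p hp
  · intro p1 h1 p2 h2 hfe
    simp only [Set.mem_setOf_eq] at h1 h2
    simp only [hf, dif_pos h1, dif_pos h2] at hfe
    exact hu3 p2 h2 p1 (hfe ▸ hu2 p1 h1)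
end

section
/- Let φ be an H-model in a finite simple graph G and let B be a biconnected component of H. Then the induced subgraph G[φ(V(B))], where φ(V(B)) denotes the union of the branch sets φ(v) over v ∈ V(B), contains a biconnected subgraph on at least |V(B)| vertices. -/
/-- A cut vertex: a vertex whose removal increases the number of connected components. -/
def IsCutVertex {U : Type*} (K : SimpleGraph U) (v : U) : Prop :=
  Nat.card K.ConnectedComponent < Nat.card ((K.induce {u | u ≠ v}).ConnectedComponent)

/-- A graph is biconnected when it is connected and contains no cut vertex. -/
def IsBiconnected {U : Type*} (K : SimpleGraph U) : Prop :=
  K.Connected ∧ ∀ v : U, ¬ IsCutVertex K v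

/-!
Among the models `ψ ≤ φ` of `B` choose one whose union `S` is smallest. If some `x ∈ ψ v`
separated `G[S]`, then, `B - v` being connected, all branch sets other than `ψ v` would lie in a
single component `A` of `G[S] - x`; every vertex of `ψ v ∩ A` reaches `x` inside `ψ v` without
leaving `A`, so replacing `ψ v` by `(ψ v ∩ A) ∪ {x}` gives a strictly smaller model. Hence `G[S]`
is biconnected, and it has at least `|V(B)|` vertices because the branch sets are disjoint and
nonempty.
-/

section

open SimpleGraph Function

variable {U U' V : Type*} {G : SimpleGraph V} {K : SimpleGraph U}

namespace SimpleGraph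

def ReachableIn (G : SimpleGraph V) (s : Set V) (a b : V) : Prop :=
  ∃ p : G.Walk a b, ∀ x ∈ p.support, x ∈ s

namespace ReachableIn

variable {s t : Set V} {a b c : V}

lemma right_mem (h : G.ReachableIn s a b) : b ∈ s :=
  h.elim fun p hp => hp b p.end_mem_support

lemma refl (ha : a ∈ s) : G.ReachableIn s a a :=
  ⟨.nil, by simpa using ha⟩

lemma symm (h : G.ReachableIn s a b) : G.ReachableIn s b a :=
  h.elim fun p hp => ⟨p.reverse, by simpa using hp⟩

lemma trans (hab : G.ReachableIn s a b) (hbc : G.ReachableIn s b c) : G.ReachableIn s a c := by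
  obtain ⟨p, hp⟩ := hab
  obtain ⟨q, hq⟩ := hbc
  refine ⟨p.append q, fun x hx => ?_⟩
  rw [Walk.mem_support_append_iff] at hx
  exact hx.elim (hp x) (hq x)

lemma mono (hst : s ⊆ t) (h : G.ReachableIn s a b) : G.ReachableIn t a b :=
  h.elim fun p hp => ⟨p, fun x hx => hst (hp x hx)⟩

end ReachableIn

variable {s : Set V}

lemma Adj.reachableIn {a b : V} (h : G.Adj a b) (ha : a ∈ s) (hb : b ∈ s) :
    G.ReachableIn s a b :=
  ⟨.cons h .nil, by simp [ha, hb]⟩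

lemma Walk.reachableIn_of_induce {a b : s} (p : (G.induce s).Walk a b) :
    G.ReachableIn s a b := by
  induction p with
  | nil => exact .refl (Subtype.property _)
  | cons h _ ih =>
    exact ((induce_adj.1 h).reachableIn (Subtype.property _) (Subtype.property _)).trans ih

lemma reachableIn_iff_reachable_induce {a b : V} (ha : a ∈ s) (hb : b ∈ s) :
    G.ReachableIn s a b ↔ (G.induce s).Reachable ⟨a, ha⟩ ⟨b, hb⟩ :=
  ⟨fun ⟨p, hp⟩ => ⟨p.induce s hp⟩, fun ⟨p⟩ => p.reachableIn_of_induce⟩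

lemma preconnected_induce_iff_reachableIn :
    (G.induce s).Preconnected ↔ ∀ a ∈ s, ∀ b ∈ s, G.ReachableIn s a b :=
  ⟨fun h _ ha _ hb => (reachableIn_iff_reachable_induce ha hb).2 (h _ _),
    fun h a b => (reachableIn_iff_reachable_induce a.2 b.2).1 (h a a.2 b b.2)⟩

lemma connected_induce_iff_reachableIn :
    (G.induce s).Connected ↔ s.Nonempty ∧ ∀ a ∈ s, ∀ b ∈ s, G.ReachableIn s a b := by
  rw [connected_iff, preconnected_induce_iff_reachableIn, Set.nonempty_coe_sort, and_comm]

lemma Walk.reachableIn_insert_inter {C A : Set V} {x y : V}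
    (hA : ∀ p ∈ A, ∀ q ∈ C, q ≠ x → G.Adj p q → q ∈ A) (p : G.Walk y x)
    (hp : ∀ z ∈ p.support, z ∈ C) (hy : y ∈ insert x (C ∩ A)) :
    G.ReachableIn (insert x (C ∩ A)) y x := by
  induction p with
  | nil => exact .refl hy
  | @cons y d x h p ih =>
    obtain rfl | hy' := hy
    · exact .refl (Set.mem_insert _ _)
    have hdC : d ∈ C := hp d (by simp)
    have hd : d ∈ insert x (C ∩ A) := by
      by_cases hdx : d = x
      · exact .inl hdx
      · exact .inr ⟨hdC, hA y hy'.2 d hdC hdx h⟩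
    exact (h.reachableIn (.inr hy') hd).trans (ih hA (fun z hz => hp z (by simp [hz])) hd)

lemma connected_induce_insert_inter {C A : Set V} {x : V} (hC : (G.induce C).Connected)
    (hx : x ∈ C) (hA : ∀ p ∈ A, ∀ q ∈ C, q ≠ x → G.Adj p q → q ∈ A) :
    (G.induce (insert x (C ∩ A))).Connected := by
  refine connected_induce_iff_reachableIn.2 ⟨⟨x, Set.mem_insert _ _⟩, fun a ha b hb => ?_⟩
  have hsub : insert x (C ∩ A) ⊆ C := Set.insert_subset hx Set.inter_subset_left
  have hC' := (connected_induce_iff_reachableIn.1 hC).2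
  obtain ⟨p, hp⟩ := hC' a (hsub ha) x hx
  obtain ⟨q, hq⟩ := hC' b (hsub hb) x hx
  exact (p.reachableIn_insert_inter hA hp ha).trans (q.reachableIn_insert_inter hA hq hb).symm

end SimpleGraph

lemma not_isCutVertex_iff [Finite U] (hK : K.Connected) (v : U) :
    ¬ IsCutVertex K v ↔ (K.induce {u | u ≠ v}).Preconnected := by
  have hK1 : Nat.card K.ConnectedComponent = 1 := Nat.card_eq_one_iff_unique.2
    ⟨hK.preconnected.subsingleton_connectedComponent, hK.nonempty.map K.connectedComponentMk⟩
  rw [IsCutVertex, hK1, not_lt, Finite.card_le_one_iff_subsingleton]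
  exact ⟨fun _ u w => ConnectedComponent.eq.1 (Subsingleton.elim _ _),
    Preconnected.subsingleton_connectedComponent⟩

lemma isBiconnected_iff [Finite U] :
    IsBiconnected K ↔ K.Connected ∧ ∀ v, (K.induce {u | u ≠ v}).Preconnected :=
  and_congr_right fun hK => forall_congr' (not_isCutVertex_iff hK)

lemma isBiconnected_induce_iff [Finite V] {S : Set V} :
    IsBiconnected (G.induce S) ↔
      (G.induce S).Connected ∧ ∀ x ∈ S, (G.induce (S \ {x})).Preconnected := by
  rw [isBiconnected_iff, Subtype.forall]
  refine and_congr_right fun _ => forall₂_congr fun x hx => ?_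
  let e : (G.induce S).induce {u | u ≠ ⟨x, hx⟩} ≃g G.induce (S \ {x}) :=
    { toFun := fun u => ⟨u.1.1, u.1.2, fun h => u.2 (Subtype.ext h)⟩
      invFun := fun u => ⟨⟨u.1, u.2.1⟩, fun h => u.2.2 (congrArg Subtype.val h)⟩
      left_inv := fun _ => rfl
      right_inv := fun _ => rfl
      map_rel_iff' := Iff.rfl }
  exact e.preconnected_iff

namespace IsMinorModel

variable {ψ : U → Set V}

lemma comp {K' : SimpleGraph U'} (hψ : IsMinorModel G K ψ) (f : K' →g K) (hf : Injective f) :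
    IsMinorModel G K' (ψ ∘ f) :=
  ⟨fun u => hψ.1 (f u), fun _ _ h => hψ.2.1 _ _ (f.map_adj h), fun _ _ h => hψ.2.2 _ _ (hf.ne h)⟩

lemma card_le_ncard_iUnion [Finite V] (hψ : IsMinorModel G K ψ) :
    Nat.card U ≤ (⋃ u, ψ u).ncard := by
  let f u : ψ u := (hψ.1 u).nonempty.some
  rw [← Nat.card_coe_set_eq]
  refine Nat.card_le_card_of_injective (fun u => ⟨f u, Set.mem_iUnion_of_mem u (f u).2⟩) ?_
  intro u w h
  by_contra huw
  exact Set.disjoint_left.1 (hψ.2.2 u w huw) (f u).2 (congrArg Subtype.val h ▸ (f w).2)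

lemma reachableIn_iUnion (hψ : IsMinorModel G K ψ) (hK : K.Preconnected) {u w : U} {a b : V}
    (ha : a ∈ ψ u) (hb : b ∈ ψ w) : G.ReachableIn (⋃ u, ψ u) a b := by
  have hbranch : ∀ u, ∀ a ∈ ψ u, ∀ b ∈ ψ u, G.ReachableIn (⋃ u, ψ u) a b := fun u a ha b hb =>
    ((connected_induce_iff_reachableIn.1 (hψ.1 u)).2 a ha b hb).mono (Set.subset_iUnion ψ u)
  obtain ⟨p⟩ := hK u w
  induction p generalizing a with
  | nil => exact hbranch _ a ha b hb
  | cons h _ ih =>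
    obtain ⟨a', ha', b', hb', hab'⟩ := hψ.2.1 _ _ h
    have hab'' := hab'.reachableIn (Set.mem_iUnion_of_mem _ ha') (Set.mem_iUnion_of_mem _ hb')
    exact ((hbranch _ a ha a' ha').trans hab'').trans (ih hb' hb)

lemma connected_induce_iUnion (hψ : IsMinorModel G K ψ) (hK : K.Connected) :
    (G.induce (⋃ u, ψ u)).Connected := by
  refine connected_induce_iff_reachableIn.2 ⟨?_, fun a ha b hb => ?_⟩
  · obtain ⟨a, ha⟩ := (hψ.1 hK.nonempty.some).nonempty
    exact ⟨a, Set.mem_iUnion_of_mem _ ha⟩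
  · obtain ⟨u, ha⟩ := Set.mem_iUnion.1 ha
    obtain ⟨w, hb⟩ := Set.mem_iUnion.1 hb
    exact hψ.reachableIn_iUnion hK.preconnected ha hb

lemma reachableIn_iUnion_diff_singleton (hψ : IsMinorModel G K ψ) {v : U}
    (hKv : (K.induce {u | u ≠ v}).Preconnected) {x : V} (hx : x ∈ ψ v) {u w : U}
    (hu : u ≠ v) (hw : w ≠ v) {a b : V} (ha : a ∈ ψ u) (hb : b ∈ ψ w) :
    G.ReachableIn ((⋃ u, ψ u) \ {x}) a b := by
  have hsub : ⋃ u : {u | u ≠ v}, ψ u ⊆ (⋃ u, ψ u) \ {x} := by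
    refine Set.iUnion_subset fun u y hy => ⟨Set.mem_iUnion_of_mem _ hy, ?_⟩
    rintro rfl
    exact Set.disjoint_left.1 (hψ.2.2 _ _ u.2) hy hx
  have hψv := hψ.comp (Embedding.induce {u | u ≠ v}).toHom Subtype.val_injective
  exact (hψv.reachableIn_iUnion hKv (u := ⟨u, hu⟩) (w := ⟨w, hw⟩) ha hb).mono hsub

lemma update [DecidableEq U] (hψ : IsMinorModel G K ψ) {v : U} {T : Set V} (hT : T ⊆ ψ v)
    (hTc : (G.induce T).Connected) (hadj : ∀ w, K.Adj v w → ∃ a ∈ T, ∃ b ∈ ψ w, G.Adj a b) :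
    IsMinorModel G K (Function.update ψ v T) := by
  have hle : Function.update ψ v T ≤ ψ := update_le_iff.2 ⟨hT, fun _ _ => le_rfl⟩
  refine ⟨fun u => ?_, fun u w h => ?_, fun u w h => (hψ.2.2 u w h).mono (hle u) (hle w)⟩
  · obtain rfl | hu := eq_or_ne u v
    · rwa [Function.update_self]
    · rw [Function.update_of_ne hu]
      exact hψ.1 u
  · obtain rfl | hu := eq_or_ne u v
    · simpa [h.ne'] using hadj w h
    obtain rfl | hw := eq_or_ne w v
    · obtain ⟨a, ha, b, hb, hab⟩ := hadj u h.symm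
      exact ⟨b, by simpa [hu] using hb, a, by simpa using ha, hab.symm⟩
    · simpa [hu, hw] using hψ.2.1 u w h

lemma update_insert_inter [DecidableEq U] (hψ : IsMinorModel G K ψ) {v : U} {x : V}
    (hx : x ∈ ψ v) {A : Set V} (hA : ∀ p ∈ A, ∀ q ∈ ψ v, q ≠ x → G.Adj p q → q ∈ A)
    (hnbr : ∀ w, K.Adj v w → ψ w ⊆ A) :
    IsMinorModel G K (Function.update ψ v (insert x (ψ v ∩ A))) := by
  refine hψ.update (Set.insert_subset hx Set.inter_subset_left)
    (connected_induce_insert_inter (hψ.1 v) hx hA) fun w hvw => ?_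
  obtain ⟨a, ha, b, hb, hab⟩ := hψ.2.1 v w hvw
  refine ⟨a, ?_, b, hb, hab⟩
  by_cases hax : a = x
  · exact .inl hax
  · exact .inr ⟨ha, hA b (hnbr w hvw hb) a ha hax hab.symm⟩

lemma exists_ssubset_of_not_reachableIn (hψ : IsMinorModel G K ψ) {v : U}
    (hKv : (K.induce {u | u ≠ v}).Preconnected) {x : V} (hx : x ∈ ψ v) {a b : V}
    (ha : a ∈ (⋃ u, ψ u) \ {x}) (hb : b ∈ (⋃ u, ψ u) \ {x})
    (hab : ¬ G.ReachableIn ((⋃ u, ψ u) \ {x}) a b) :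
    ∃ ψ' ≤ ψ, IsMinorModel G K ψ' ∧ ⋃ u, ψ' u ⊂ ⋃ u, ψ u := by
  classical
  set S := ⋃ u, ψ u
  obtain ⟨y₀, hy₀, hrest⟩ :
      ∃ y₀ ∈ S \ {x}, ∀ u ≠ v, ∀ y ∈ ψ u, G.ReachableIn (S \ {x}) y₀ y := by
    by_cases hU : ∃ u₀, u₀ ≠ v
    · obtain ⟨u₀, hu₀⟩ := hU
      obtain ⟨y₀, hy₀⟩ := (hψ.1 u₀).nonempty
      exact ⟨y₀, (hψ.reachableIn_iUnion_diff_singleton hKv hx hu₀ hu₀ hy₀ hy₀).right_mem,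
        fun u hu y hy => hψ.reachableIn_iUnion_diff_singleton hKv hx hu₀ hu hy₀ hy⟩
    · exact ⟨a, ha, fun u hu => absurd ⟨u, hu⟩ hU⟩
  set A := {y | G.ReachableIn (S \ {x}) y₀ y}
  obtain ⟨c, hc, hcA⟩ : ∃ c ∈ S \ {x}, c ∉ A := by
    by_contra! h
    exact hab ((h a ha).symm.trans (h b hb))
  have hA : ∀ p ∈ A, ∀ q ∈ ψ v, q ≠ x → G.Adj p q → q ∈ A := fun p hp q hq hqx h =>
    hp.trans (h.reachableIn hp.right_mem ⟨Set.mem_iUnion_of_mem v hq, hqx⟩)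
  have hle : Function.update ψ v (insert x (ψ v ∩ A)) ≤ ψ :=
    update_le_iff.2 ⟨Set.insert_subset hx Set.inter_subset_left, fun _ _ => le_rfl⟩
  refine ⟨_, hle, hψ.update_insert_inter hx hA fun w hvw => hrest w hvw.ne',
    (Set.ssubset_iff_of_subset (Set.iUnion_mono hle)).2 ⟨c, hc.1, ?_⟩⟩
  rw [Set.mem_iUnion]
  rintro ⟨u, hcu⟩
  obtain rfl | hu := eq_or_ne u v
  · rw [Function.update_self] at hcu
    exact hcu.elim hc.2 fun h => hcA h.2
  · rw [Function.update_of_ne hu] at hcu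
    exact hcA (hrest u hu c hcu)

theorem exists_le_isBiconnected_induce_iUnion [Finite U] [Finite V] (hK : IsBiconnected K)
    (hψ : IsMinorModel G K ψ) :
    ∃ ψ' ≤ ψ, IsMinorModel G K ψ' ∧ IsBiconnected (G.induce (⋃ u, ψ' u)) := by
  rw [isBiconnected_iff] at hK
  obtain ⟨ψ', ⟨hψ'ψ, hψ'⟩, hmin⟩ := (measure fun χ : U → Set V => (⋃ u, χ u).ncard).wf.has_min
    {χ | χ ≤ ψ ∧ IsMinorModel G K χ} ⟨ψ, le_rfl, hψ⟩
  refine ⟨ψ', hψ'ψ, hψ', isBiconnected_induce_iff.2 ⟨hψ'.connected_induce_iUnion hK.1, ?_⟩⟩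
  intro x hx
  obtain ⟨v, hxv⟩ := Set.mem_iUnion.1 hx
  refine preconnected_induce_iff_reachableIn.2 fun a ha b hb => ?_
  by_contra hab
  obtain ⟨χ, hχ, hχK, hlt⟩ := hψ'.exists_ssubset_of_not_reachableIn (hK.2 v) hxv ha hb hab
  exact hmin χ ⟨hχ.trans hψ'ψ, hχK⟩ (Set.ncard_lt_ncard hlt (Set.toFinite _))

end IsMinorModel

end

theorem stmt_5_general {V W : Type*} [Fintype V] [Fintype W]
    (G : SimpleGraph V) (H : SimpleGraph W)
    (φ : W → Set V) (hφ : IsMinorModel G H φ)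
    (B : H.Subgraph) (hB : IsBiconnected B.coe) :
    ∃ D : G.Subgraph, D.verts ⊆ (⋃ v ∈ B.verts, φ v) ∧
      B.verts.ncard ≤ D.verts.ncard ∧ IsBiconnected D.coe := by
  obtain ⟨ψ, hψφ, hψ, hbi⟩ :=
    (hφ.comp B.hom SimpleGraph.Subgraph.hom_injective).exists_le_isBiconnected_induce_iUnion hB
  refine ⟨(⊤ : G.Subgraph).induce (⋃ u, ψ u), ?_, ?_, ?_⟩
  · rw [Set.biUnion_eq_iUnion]
    exact Set.iUnion_mono hψφ
  · rw [← Nat.card_coe_set_eq]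
    exact hψ.card_le_ncard_iUnion
  · rw [← SimpleGraph.induce_eq_coe_induce_top]
    exact hbi

/-- If `φ` is an `H`-model in `G` and `B` is a biconnected component of `H` (a maximal
biconnected subgraph of `H`), then `G[φ(V(B))]` contains a biconnected subgraph on at
least `|V(B)|` vertices. -/
theorem stmt_5 {V W : Type*} [Fintype V] [Fintype W]
    (G : SimpleGraph V) (H : SimpleGraph W)
    (φ : W → Set V) (hφ : IsMinorModel G H φ)
    (B : H.Subgraph) (hB : IsBiconnected B.coe)
    (hmax : ∀ B' : H.Subgraph, B ≤ B' → IsBiconnected B'.coe → B' = B) :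
    ∃ D : G.Subgraph, D.verts ⊆ (⋃ v ∈ B.verts, φ v) ∧
      B.verts.ncard ≤ D.verts.ncard ∧ IsBiconnected D.coe :=
  stmt_5_general G H φ hφ B hB
end

section
/- Let G be a finite simple graph and let α ≥ β be integers. Then αprune(βprune(G)) = αprune(G); that is, the maximal α-robust subgraph of the maximal β-robust subgraph of G is equal to the maximal α-robust subgraph of G. -/
/-- The vertex set of `αprune(G)`: the union of all vertex sets `A` for which
`G[A]` is `α`-robust. -/
def pruneSet {V : Type*} (G : SimpleGraph V) (α : ℤ) : Set V :=
  {v | ∃ A : Set V, IsRobustGraph (G.induce A) α ∧ v ∈ A}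

/-- `αprune(G)`: the unique maximal `α`-robust subgraph of `G` (empty if none exists). -/
def prune {V : Type*} (G : SimpleGraph V) (α : ℤ) : SimpleGraph (pruneSet G α) :=
  G.induce (pruneSet G α)

/-- Robustness is invariant under graph isomorphism. -/
lemma robust_of_iso {V W : Type*} {G : SimpleGraph V} {H : SimpleGraph W} (φ : G ≃g H)
    {α : ℤ} (h : IsRobustGraph G α) : IsRobustGraph H α := by
  obtain ⟨h1, h2⟩ := h
  constructor
  · calc α ≤ _ := h1
    _ = _ := by
      rw [Set.ncard_univ, Set.ncard_univ, Nat.card_congr φ.toEquiv]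
  · intro w C
    set v := φ.symm w with hv
    have hiff : ∀ u : V, u ≠ v ↔ φ u ≠ w := by
      intro u
      rw [hv]
      constructor
      · intro h heq; exact h (by simp [← heq])
      · intro h heq; apply h; rw [heq]; simp
    let ψ : (G.induce {u | u ≠ v}) ≃g (H.induce {u | u ≠ w}) :=
      { toEquiv := Equiv.subtypeEquiv φ.toEquiv hiff
        map_rel_iff' := by intro a b; exact φ.map_rel_iff }
    set C' := ψ.connectedComponentEquiv.symm C with hC'
    have hCC : ψ.connectedComponentEquiv C' = C := by simp [hC']
    have := h2 v C'
    have hcard : C'.supp.ncard = C.supp.ncard := by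
      rw [← Nat.card_coe_set_eq, ← Nat.card_coe_set_eq]
      rw [← hCC]
      exact Nat.card_congr (SimpleGraph.ConnectedComponent.isoEquivSupp ψ C')
    omega

/-- Robustness is antitone in `α`. -/
lemma robust_mono {V : Type*} {G : SimpleGraph V} {α β : ℤ} (hβα : β ≤ α)
    (h : IsRobustGraph G α) : IsRobustGraph G β :=
  ⟨le_trans hβα h.1, fun v C => le_trans (by omega) (h.2 v C)⟩

/-- The iso between a double induced subgraph and the induced subgraph on the image. -/
noncomputable def induceInduceIso {V : Type*} (G : SimpleGraph V) (S : Set V) (B : Set S) :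
    ((G.induce S).induce B) ≃g (G.induce (Subtype.val '' B)) where
  toEquiv := (Equiv.Set.image Subtype.val B Subtype.val_injective).trans
    (Equiv.setCongr rfl)
  map_rel_iff' := by intro a b; rfl

/-- For `α ≥ β`, `αprune(βprune(G)) = αprune(G)`: the vertex set of the maximal
`α`-robust subgraph of `βprune(G)` (viewed as a subset of `V(G)`) equals the vertex set
of the maximal `α`-robust subgraph of `G`; since both graphs are induced subgraphs of
`G`, this means the two graphs are equal. -/
theorem stmt_6 {V : Type*} [Fintype V] (G : SimpleGraph V) (α β : ℤ) (hαβ : β ≤ α) :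
    Subtype.val '' pruneSet (prune G β) α = pruneSet G α := by
  ext v
  constructor
  · rintro ⟨⟨v, hv⟩, ⟨A', hA', hmem⟩, rfl⟩
    exact ⟨Subtype.val '' A', robust_of_iso (induceInduceIso G _ A') hA',
      ⟨⟨v, hv⟩, hmem, rfl⟩⟩
  · rintro ⟨A, hA, hv⟩
    have hsub : A ⊆ pruneSet G β := fun a ha => ⟨A, robust_mono hαβ hA, ha⟩
    set A' : Set (pruneSet G β) := {x | ↑x ∈ A} with hA'
    have himg : Subtype.val '' A' = A := by
      ext a
      constructor
      · rintro ⟨x, hx, rfl⟩; exact hx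
      · intro ha; exact ⟨⟨a, hsub ha⟩, ha, rfl⟩
    have : IsRobustGraph ((prune G β).induce A') α := by
      apply robust_of_iso (induceInduceIso G (pruneSet G β) A').symm
      rw [himg]; exact hA
    exact ⟨⟨v, hsub hv⟩, ⟨A', this, hv⟩, rfl⟩
end

section
/- Let H and G be finite simple graphs and α an integer. If H is a minor of G, then αprune(H) is a minor of αprune(G). -/
open Set

namespace SimpleGraph

variable {V : Type*}

lemma spanningCoe_induce_adj (G : SimpleGraph V) {T : Set V} {a b : V} :
    (G.induce T).spanningCoe.Adj a b ↔ a ∈ T ∧ b ∈ T ∧ G.Adj a b := by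
  simp only [map_adj, comap_adj, Function.Embedding.subtype_apply, Subtype.exists]
  constructor
  · rintro ⟨a, ha, b, hb, h, rfl, rfl⟩
    exact ⟨ha, hb, h⟩
  · rintro ⟨ha, hb, h⟩
    exact ⟨a, ha, b, hb, h, rfl, rfl⟩

lemma reachable_spanningCoe_iff {s : Set V} (H : SimpleGraph s) {a b : s} :
    H.spanningCoe.Reachable a b ↔ H.Reachable a b := by
  refine ⟨fun h => ?_, fun h => h.map (Embedding.spanningCoe H).toHom⟩
  suffices ∀ z, H.spanningCoe.Reachable a z → ∀ hz : z ∈ s, H.Reachable a ⟨z, hz⟩ from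
    this b h b.2
  intro z hz
  induction (reachable_iff_reflTransGen _ _).1 hz with
  | refl => exact fun _ => Reachable.refl _
  | tail hr hcd ih =>
    obtain ⟨-, c, d, hcd, rfl, rfl⟩ := hcd
    exact fun _ => (ih ((reachable_iff_reflTransGen _ _).2 hr) c.2).trans hcd.reachable

noncomputable def induceInduceIso (G : SimpleGraph V) (S : Set V) (T : Set S) :
    (G.induce S).induce T ≃g G.induce (Subtype.val '' T) where
  toEquiv := Equiv.Set.image _ T Subtype.val_injective
  map_rel_iff' := Iff.rfl

lemma ncard_supp_connectedComponentEquiv {V' : Type*} {G : SimpleGraph V} {G' : SimpleGraph V'}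
    (e : G ≃g G') (C : G.ConnectedComponent) :
    (e.connectedComponentEquiv C).supp.ncard = C.supp.ncard := by
  rw [← Nat.card_coe_set_eq, ← Nat.card_coe_set_eq]
  exact Nat.card_congr (ConnectedComponent.isoEquivSupp e C).symm

/-- The vertex set of the component of `y` in `G[T]` (just `{y}` when `y ∉ T`). -/
def componentIn (G : SimpleGraph V) (T : Set V) (y : V) : Set V :=
  {z | (G.induce T).spanningCoe.Reachable y z}

/-- `IsRobustGraph (G.induce A) α` in terms of subsets of `V` (see `isRobustGraph_induce_iff`). -/
def IsRobustIn (G : SimpleGraph V) (A : Set V) (α : ℤ) : Prop :=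
  α ≤ A.ncard ∧ ∀ x ∈ A, ∀ y ∈ A \ {x}, α - 1 ≤ (G.componentIn (A \ {x}) y).ncard

variable {G : SimpleGraph V} {A S T X : Set V} {α : ℤ} {x y z w : V}

lemma mem_componentIn_self : y ∈ G.componentIn T y := Reachable.refl _

lemma mem_componentIn_of_adj (hz : z ∈ G.componentIn T y) (hzT : z ∈ T) (hwT : w ∈ T)
    (h : G.Adj z w) : w ∈ G.componentIn T y :=
  Reachable.trans hz (G.spanningCoe_induce_adj.2 ⟨hzT, hwT, h⟩).reachable

lemma componentIn_subset_of_adj_closed (hy : y ∈ X)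
    (hX : ∀ a ∈ X, ∀ b, a ∈ T → b ∈ T → G.Adj a b → b ∈ X) : G.componentIn T y ⊆ X := by
  intro z hz
  induction (reachable_iff_reflTransGen _ _).1 hz with
  | refl => exact hy
  | tail hr hab ih =>
    obtain ⟨ha, hb, hab⟩ := G.spanningCoe_induce_adj.1 hab
    exact hX _ (ih ((reachable_iff_reflTransGen _ _).2 hr)) _ ha hb hab

lemma componentIn_subset (hy : y ∈ T) : G.componentIn T y ⊆ T :=
  componentIn_subset_of_adj_closed hy fun _ _ _ _ hb _ => hb

lemma componentIn_mono (h : S ⊆ T) : G.componentIn S y ⊆ G.componentIn T y :=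
  componentIn_subset_of_adj_closed mem_componentIn_self
    fun _ ha _ haS hbS hab => mem_componentIn_of_adj ha (h haS) (h hbS) hab

lemma Connected.subset_componentIn (hS : (G.induce S).Connected) (hST : S ⊆ T) (hz : z ∈ S)
    (hzy : z ∈ G.componentIn T y) : S ⊆ G.componentIn T y := by
  intro w hw
  have hzw : (G.induce S).spanningCoe.Reachable z w :=
    (reachable_spanningCoe_iff _ (a := ⟨z, hz⟩) (b := ⟨w, hw⟩)).2 (hS.preconnected _ _)
  refine hzy.trans (hzw.mono fun a b hab => ?_)
  obtain ⟨ha, hb, hab⟩ := G.spanningCoe_induce_adj.1 hab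
  exact G.spanningCoe_induce_adj.2 ⟨hST ha, hST hb, hab⟩

lemma image_val_supp_connectedComponentMk_induce (y : T) :
    Subtype.val '' ((G.induce T).connectedComponentMk y).supp = G.componentIn T y := by
  ext z
  simp only [mem_image, ConnectedComponent.mem_supp_iff, ConnectedComponent.eq]
  constructor
  · rintro ⟨z, hz, rfl⟩
    exact ((reachable_spanningCoe_iff _).2 hz).symm
  · intro hz
    have hzT := componentIn_subset y.2 hz
    exact ⟨⟨z, hzT⟩, ((reachable_spanningCoe_iff _ (b := ⟨z, hzT⟩)).1 hz).symm, rfl⟩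

/-- Cutting a component `D` of `P - x` off a connected set `P` leaves it connected, because `x` is
the only vertex of `P \ D` with a neighbour in `D`. -/
lemma induce_diff_componentIn_connected {P : Set V} (hP : (G.induce P).Connected) (hx : x ∈ P)
    (hy : y ∈ P \ {x}) : (G.induce (P \ G.componentIn (P \ {x}) y)).Connected := by
  set D := G.componentIn (P \ {x}) y
  have hxD : x ∉ D := fun h => (componentIn_subset hy h).2 rfl
  rw [connected_iff_exists_forall_reachable]
  refine ⟨⟨x, hx, hxD⟩, fun a => (reachable_spanningCoe_iff _).1 ?_⟩
  suffices P ⊆ {b | b ∉ D → b ∈ G.componentIn (P \ D) x} from this a.2.1 a.2.2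
  refine (hP.subset_componentIn subset_rfl hx mem_componentIn_self).trans
    (componentIn_subset_of_adj_closed (fun _ => mem_componentIn_self) ?_)
  intro b hb c hbP hcP hbc hcD
  by_cases hbD : b ∈ D
  · obtain rfl : c = x := by
      by_contra hcx
      exact hcD (mem_componentIn_of_adj hbD (componentIn_subset hy hbD) ⟨hcP, hcx⟩ hbc)
    exact mem_componentIn_self
  · exact mem_componentIn_of_adj (hb hbD) ⟨hbP, hbD⟩ ⟨hcP, hcD⟩ hbc

lemma isRobustGraph_induce_iff : IsRobustGraph (G.induce A) α ↔ G.IsRobustIn A α := by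
  have hsupp (v : A) (u : {u : A | u ≠ v}) :
      (((G.induce A).induce {u | u ≠ v}).connectedComponentMk u).supp.ncard =
        (G.componentIn (A \ {(v : V)}) u).ncard := by
    have hset : Subtype.val '' {u : A | u ≠ v} = A \ {(v : V)} := by
      ext z
      simp [Subtype.ext_iff, and_comm]
    rw [← ncard_supp_connectedComponentEquiv (G.induceInduceIso A _),
      Iso.connectedComponentEquiv_apply, ConnectedComponent.map_mk,
      ← ncard_image_of_injective _ Subtype.val_injective,
      image_val_supp_connectedComponentMk_induce]
    exact congrArg (fun T => (G.componentIn T u).ncard) hset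
  rw [IsRobustGraph, IsRobustIn, ncard_univ, Nat.card_coe_set_eq]
  refine and_congr_right fun _ => ⟨fun h x hx y hy => ?_, fun h v C => ?_⟩
  · have := h ⟨x, hx⟩ (connectedComponentMk _ ⟨⟨y, hy.1⟩, fun e => hy.2 (congrArg Subtype.val e)⟩)
    rwa [hsupp] at this
  · refine C.ind fun u => ?_
    rw [hsupp]
    exact h v v.2 u ⟨(u : A).2, fun e => u.2 (Subtype.ext e)⟩

lemma IsRobustIn.le_ncard_componentIn [Finite V] (h : G.IsRobustIn A α) (hy : y ∈ A) :
    α - 1 ≤ (G.componentIn A y).ncard := by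
  by_cases hA : A ⊆ G.componentIn A y
  · have := ncard_le_ncard hA
    have := h.1
    omega
  · obtain ⟨x, hxA, hx⟩ := not_subset.1 hA
    have hyx : y ≠ x := fun e => hx (e ▸ mem_componentIn_self)
    calc α - 1 ≤ (G.componentIn (A \ {x}) y).ncard := h.2 x hxA y ⟨hy, hyx⟩
      _ ≤ (G.componentIn A y).ncard := by
        exact_mod_cast ncard_le_ncard (componentIn_mono sdiff_subset)

lemma IsRobustIn.le_ncard_componentIn_diff [Finite V] (h : G.IsRobustIn A α) (hy : y ∈ A)
    (hyx : y ≠ x) : α - 1 ≤ (G.componentIn (A \ {x}) y).ncard := by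
  by_cases hx : x ∈ A
  · exact h.2 x hx y ⟨hy, hyx⟩
  · rw [sdiff_singleton_eq_self hx]
    exact h.le_ncard_componentIn hy

lemma isRobustIn_sUnion [Finite V] {𝒜 : Set (Set V)} (hne : 𝒜.Nonempty)
    (h : ∀ A ∈ 𝒜, G.IsRobustIn A α) : G.IsRobustIn (⋃₀ 𝒜) α := by
  obtain ⟨A₀, hA₀⟩ := hne
  refine ⟨(h A₀ hA₀).1.trans (by exact_mod_cast ncard_le_ncard (subset_sUnion_of_mem hA₀)),
    fun x _ y hy => ?_⟩
  obtain ⟨A, hA, hyA⟩ := hy.1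
  calc α - 1 ≤ (G.componentIn (A \ {x}) y).ncard := (h A hA).le_ncard_componentIn_diff hyA hy.2
    _ ≤ (G.componentIn (⋃₀ 𝒜 \ {x}) y).ncard := by
      exact_mod_cast ncard_le_ncard
        (componentIn_mono (sdiff_subset_sdiff_left (subset_sUnion_of_mem hA)))

lemma isRobustIn_pruneSet [Finite V] (h : (pruneSet G α).Nonempty) :
    G.IsRobustIn (pruneSet G α) α := by
  have hprune : pruneSet G α = ⋃₀ {A | G.IsRobustIn A α} := by
    ext v
    simp [pruneSet, isRobustGraph_induce_iff]
  obtain ⟨-, A, hA, -⟩ := h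
  rw [hprune]
  exact isRobustIn_sUnion ⟨A, isRobustGraph_induce_iff.1 hA⟩ fun _ => id

lemma IsRobustIn.subset_pruneSet (h : G.IsRobustIn A α) : A ⊆ pruneSet G α :=
  fun _ ha => ⟨A, isRobustGraph_induce_iff.2 h, ha⟩

end SimpleGraph

namespace IsMinorModel

open SimpleGraph

variable {V W : Type*} {G : SimpleGraph V} {H : SimpleGraph W} {ψ : W → Set V} {B : Set W}
  {α : ℤ} {u v : W} {x y z : V}

lemma eq_of_mem (hψ : IsMinorModel G H ψ) {u w : W} {a : V} (hu : a ∈ ψ u) (hw : a ∈ ψ w) :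
    u = w := by
  by_contra h
  exact disjoint_left.1 (hψ.2.2 u w h) hu hw

lemma restrict (hψ : IsMinorModel G H ψ) (B : Set W) :
    IsMinorModel G (H.induce B) (fun u => ψ u) :=
  ⟨fun u => hψ.1 u, fun u w h => hψ.2.1 u w h,
    fun u w h => hψ.2.2 u w (Subtype.coe_injective.ne h)⟩

lemma preimage_val (hψ : IsMinorModel G H ψ) {S : Set V} (hS : ∀ u, ψ u ⊆ S) :
    IsMinorModel (G.induce S) H (fun u => Subtype.val ⁻¹' ψ u) := by
  refine ⟨fun u => (G.induceInduceIso S _).connected_iff.2 ?_, fun u w h => ?_,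
    fun u w h => (hψ.2.2 u w h).preimage _⟩
  · rw [Subtype.image_preimage_coe, inter_eq_right.2 (hS u)]
    exact hψ.1 u
  · obtain ⟨a, ha, b, hb, hab⟩ := hψ.2.1 u w h
    exact ⟨⟨a, hS u ha⟩, ha, ⟨b, hS w hb⟩, hb, hab⟩

lemma ncard_le [Finite V] (hψ : IsMinorModel G H ψ) {K : Set W} {C : Set V}
    (hK : ∀ u ∈ K, ψ u ⊆ C) : K.ncard ≤ C.ncard := by
  choose pick hpick using fun u => nonempty_coe_sort.1 (hψ.1 u).nonempty
  exact ncard_le_ncard_of_injOn pick (fun u hu => hK u hu (hpick u))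
    fun u _ w _ h => hψ.eq_of_mem (hpick u) (h ▸ hpick w)

lemma update_diff [DecidableEq W] (hψ : IsMinorModel G H ψ) {v : W} {D : Set V}
    (hconn : (G.induce (ψ v \ D)).Connected)
    (hD : ∀ w, H.Adj v w → ∀ a ∈ D, ∀ b ∈ ψ w, ¬ G.Adj a b) :
    IsMinorModel G H (Function.update ψ v (ψ v \ D)) := by
  have hsub (u : W) : Function.update ψ v (ψ v \ D) u ⊆ ψ u := by
    rcases eq_or_ne u v with rfl | h
    · rw [Function.update_self]
      exact sdiff_subset
    · rw [Function.update_of_ne h]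
  refine ⟨fun u => ?_, fun u w huw => ?_, fun u w h => (hψ.2.2 u w h).mono (hsub u) (hsub w)⟩
  · rcases eq_or_ne u v with rfl | h
    · rwa [Function.update_self]
    · rw [Function.update_of_ne h]
      exact hψ.1 u
  obtain ⟨a, ha, b, hb, hab⟩ := hψ.2.1 u w huw
  refine ⟨a, ?_, b, ?_, hab⟩
  · rcases eq_or_ne u v with rfl | hu
    · rw [Function.update_self]
      exact ⟨ha, fun haD => hD w huw a haD b hb hab⟩
    · rwa [Function.update_of_ne hu]
  · rcases eq_or_ne w v with rfl | hw
    · rw [Function.update_self]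
      exact ⟨hb, fun hbD => hD u huw.symm b hbD a ha hab.symm⟩
    · rwa [Function.update_of_ne hw]

lemma subset_iUnion_diff (hψ : IsMinorModel G H ψ) (hx : x ∈ ψ v) (huv : u ≠ v) :
    ψ u ⊆ (⋃ w, ψ w) \ {x} := fun _ ha =>
  ⟨mem_iUnion_of_mem u ha, fun hax => huv (hψ.eq_of_mem ha (mem_singleton_iff.1 hax ▸ hx))⟩

lemma subset_componentIn (hψ : IsMinorModel G H ψ) (hx : x ∈ ψ v) (huv : u ≠ v) (hz : z ∈ ψ u)
    (hzy : z ∈ G.componentIn ((⋃ w, ψ w) \ {x}) y) :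
    ψ u ⊆ G.componentIn ((⋃ w, ψ w) \ {x}) y :=
  (hψ.1 u).subset_componentIn (hψ.subset_iUnion_diff hx huv) hz hzy

lemma exists_subset_componentIn [Finite V] (hψ : IsMinorModel G H ψ)
    (hmin : ∀ φ, IsMinorModel G H φ → (⋃ u, ψ u).ncard ≤ (⋃ u, φ u).ncard)
    (hx : x ∈ ψ v) (hy : y ∈ (⋃ u, ψ u) \ {x}) :
    ∃ u ≠ v, ψ u ⊆ G.componentIn ((⋃ u, ψ u) \ {x}) y := by
  classical
  obtain ⟨u₀, hyu₀⟩ := mem_iUnion.1 hy.1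
  rcases ne_or_eq u₀ v with hu₀ | rfl
  · exact ⟨u₀, hu₀, hψ.subset_componentIn hx hu₀ hyu₀ mem_componentIn_self⟩
  by_contra! hC
  set D := G.componentIn (ψ u₀ \ {x}) y
  have hDC : D ⊆ G.componentIn ((⋃ u, ψ u) \ {x}) y :=
    componentIn_mono (sdiff_subset_sdiff_left (subset_iUnion ψ u₀))
  have hcut := hψ.update_diff (G.induce_diff_componentIn_connected (hψ.1 u₀) hx ⟨hyu₀, hy.2⟩)
    fun w hw a ha b hb hab => hC w hw.ne' <| hψ.subset_componentIn hx hw.ne' hb <|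
      mem_componentIn_of_adj (hDC ha) (componentIn_subset hy (hDC ha))
        (hψ.subset_iUnion_diff hx hw.ne' hb) hab
  have hsub : ⋃ u, Function.update ψ u₀ (ψ u₀ \ D) u ⊆ (⋃ u, ψ u) \ {y} := by
    refine iUnion_subset fun u a ha => ?_
    rcases eq_or_ne u u₀ with rfl | hu
    · rw [Function.update_self] at ha
      exact ⟨mem_iUnion_of_mem u ha.1,
        fun hay => ha.2 (mem_singleton_iff.1 hay ▸ mem_componentIn_self)⟩
    · rw [Function.update_of_ne hu] at ha
      exact ⟨mem_iUnion_of_mem u ha,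
        fun hay => hu (hψ.eq_of_mem ha (mem_singleton_iff.1 hay ▸ hyu₀))⟩
  exact (hmin _ hcut).not_gt
    ((ncard_le_ncard hsub).trans_lt (ncard_lt_ncard (sdiff_singleton_ssubset.2 hy.1)))

lemma isRobustIn_iUnion [Finite V] {ψ : B → Set V} (hB : H.IsRobustIn B α)
    (hψ : IsMinorModel G (H.induce B) ψ)
    (hmin : ∀ φ, IsMinorModel G (H.induce B) φ → (⋃ u, ψ u).ncard ≤ (⋃ u, φ u).ncard) :
    G.IsRobustIn (⋃ u, ψ u) α := by
  refine ⟨hB.1.trans ?_, fun x hx y hy => ?_⟩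
  · have := hψ.ncard_le (K := univ) fun u _ => subset_iUnion ψ u
    rw [ncard_univ, Nat.card_coe_set_eq] at this
    exact_mod_cast this
  obtain ⟨v, hxv⟩ := mem_iUnion.1 hx
  obtain ⟨u, huv, hu⟩ := hψ.exists_subset_componentIn hmin hxv hy
  set C := G.componentIn ((⋃ u, ψ u) \ {x}) y
  set K := H.componentIn (B \ {(v : W)}) u
  have huB : (u : W) ∈ B \ {(v : W)} := ⟨u.2, Subtype.coe_injective.ne huv⟩
  have hKB : K ⊆ B := (componentIn_subset huB).trans sdiff_subset
  have hKC : K ⊆ {w | ∀ hw : w ∈ B, ψ ⟨w, hw⟩ ⊆ C} := by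
    refine componentIn_subset_of_adj_closed (fun _ => hu) fun a ha b haB hbB hab hb => ?_
    have hbv : (⟨b, hb⟩ : B) ≠ v := fun e => hbB.2 (congrArg Subtype.val e)
    obtain ⟨a', ha', b', hb', hab'⟩ := hψ.2.1 ⟨a, haB.1⟩ ⟨b, hb⟩ hab
    exact hψ.subset_componentIn hxv hbv hb' <| mem_componentIn_of_adj (ha haB.1 ha')
      (componentIn_subset hy (ha haB.1 ha')) (hψ.subset_iUnion_diff hxv hbv hb') hab'
  calc α - 1 ≤ K.ncard := hB.2 v v.2 u huB
    _ = (Subtype.val ⁻¹' K : Set B).ncard := by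
      rw [ncard_preimage_of_injective_subset_range Subtype.val_injective
        (by rwa [Subtype.range_coe])]
    _ ≤ C.ncard := by exact_mod_cast hψ.ncard_le fun w hw => hKC hw w.2

lemma exists_isRobustIn_iUnion [Finite V] [Finite W] {φ : W → Set V}
    (hφ : IsMinorModel G H φ) (hB : H.IsRobustIn B α) :
    ∃ ψ : B → Set V, IsMinorModel G (H.induce B) ψ ∧ G.IsRobustIn (⋃ u, ψ u) α := by
  obtain ⟨ψ, hψ, hmin⟩ := exists_min_image {ψ : B → Set V | IsMinorModel G (H.induce B) ψ}
    (fun ψ => (⋃ u, ψ u).ncard) (toFinite _) ⟨_, hφ.restrict B⟩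
  exact ⟨ψ, hψ, isRobustIn_iUnion hB hψ hmin⟩

end IsMinorModel

lemma isMinorOf_of_isEmpty {V W : Type*} [IsEmpty W] (H : SimpleGraph W) (G : SimpleGraph V) :
    IsMinorOf H G :=
  ⟨isEmptyElim, isEmptyElim, isEmptyElim, isEmptyElim⟩

/-- If `H` is a minor of `G` then `αprune(H)` is a minor of `αprune(G)`. -/
theorem stmt_7 {V W : Type*} [Fintype V] [Fintype W]
    (H : SimpleGraph W) (G : SimpleGraph V) (α : ℤ)
    (h : IsMinorOf H G) :
    IsMinorOf (prune H α) (prune G α) := by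
  obtain ⟨φ, hφ⟩ := h
  rcases (pruneSet H α).eq_empty_or_nonempty with hP | hP
  · have : IsEmpty (pruneSet H α) := isEmpty_coe_sort.2 hP
    exact isMinorOf_of_isEmpty _ _
  obtain ⟨ψ, hψ, hrob⟩ := hφ.exists_isRobustIn_iUnion (SimpleGraph.isRobustIn_pruneSet hP)
  exact ⟨_, hψ.preimage_val fun u => (subset_iUnion ψ u).trans hrob.subset_pruneSet⟩
end

section
/- Let G be a finite simple graph and m an integer. Then the matching number ν(G) is at most m if and only if V(G) can be partitioned into three pairwise disjoint (possibly empty) sets U, R, S such that: (i) every connected component of G[R] has odd size at least 3; (ii) S is an independent set in G; (iii) every neighbor in G of a vertex of S lies in U; and (iv) 2·|U| + |R| − odd(G[R]) ≤ 2m, where odd(G[R]) is the number of connected components of G[R] with an odd number of vertices (condition (iv) is equivalent to |U| + ½(|R| − odd(G[R])) ≤ m). -/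
/-!
Given `U`, `R`, `S`, at most `|U|` edges of a matching meet `U`; every other edge avoids `S`
(whose neighbours lie in `U`), so it lies inside one component of `G[R]`, and an odd component
always keeps a vertex uncovered. Hence `2ν(G) ≤ 2|U| + |R| - odd(G[R])`.

Conversely, `U`, `R`, `S` with `2|U| + |R| - odd(G[R]) ≤ 2ν(G)` are built by induction on `G`.
If some vertex `v` is covered by every maximum matching, deleting the edges at `v` lowers `ν`
by one; in a certificate for the smaller graph `v` is isolated, hence not in `R`, and moving it
into `U` gives a certificate for `G`. Otherwise every vertex is missed by some maximum matching,
and by Gallai's lemma no maximum matching misses two vertices of the same component. Then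
`U = ∅`, `R` = the non-isolated vertices and `S` = the isolated ones work: a maximum matching
missing one vertex of a component covers all the others by edges inside the component, so the
component is odd, and each component contributes at most one uncovered vertex.
-/

/-- The matching number of `G`: the maximum number of pairwise vertex-disjoint edges. -/
noncomputable def matchingNumber {V : Type*} (G : SimpleGraph V) : ℕ :=
  sSup {n | ∃ s : Set (Sym2 V), s ⊆ G.edgeSet ∧
    (s.Pairwise fun e f => ∀ x, x ∈ e → x ∉ f) ∧ s.ncard = n}

open Set

namespace SimpleGraph

variable {V : Type*} {G H : SimpleGraph V}

def IsEdgeMatching (G : SimpleGraph V) (s : Set (Sym2 V)) : Prop :=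
  s ⊆ G.edgeSet ∧ s.Pairwise fun e f => ∀ x, x ∈ e → x ∉ f

def matchedVerts (s : Set (Sym2 V)) : Set V := {x | ∃ e ∈ s, x ∈ e}

lemma matchedVerts_insert (e : Sym2 V) (s : Set (Sym2 V)) :
    matchedVerts (insert e s) = {x | x ∈ e} ∪ matchedVerts s := by
  ext x
  simp [matchedVerts, or_and_right, exists_or]

lemma adj_of_mem_edgeSet {e : Sym2 V} (he : e ∈ G.edgeSet) {x y : V} (hx : x ∈ e) (hy : y ∈ e)
    (hxy : x ≠ y) : G.Adj x y := by
  obtain ⟨z, rfl⟩ := Sym2.mem_iff_exists.mp hx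
  obtain rfl | rfl := Sym2.mem_iff.mp hy
  · exact absurd rfl hxy
  · exact he

variable {s t : Set (Sym2 V)}

lemma IsEdgeMatching.mono (h : G.IsEdgeMatching s) (hGH : G ≤ H) : H.IsEdgeMatching s :=
  ⟨h.1.trans (edgeSet_mono hGH), h.2⟩

lemma IsEdgeMatching.subset (h : G.IsEdgeMatching t) (hst : s ⊆ t) : G.IsEdgeMatching s :=
  ⟨hst.trans h.1, h.2.mono hst⟩

lemma IsEdgeMatching.eq_of_mem (h : G.IsEdgeMatching s) {e f : Sym2 V} {x : V} (he : e ∈ s)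
    (hf : f ∈ s) (hxe : x ∈ e) (hxf : x ∈ f) : e = f :=
  by_contra fun hne => h.2 he hf hne x hxe hxf

lemma IsEdgeMatching.exists_adj (h : G.IsEdgeMatching s) {x : V} (hx : x ∈ matchedVerts s) :
    ∃ y, G.Adj x y := by
  obtain ⟨e, he, hxe⟩ := hx
  exact ⟨_, by rw [← mem_edgeSet, Sym2.other_spec hxe]; exact h.1 he⟩

lemma IsEdgeMatching.insert_edge (h : G.IsEdgeMatching s) {a b : V} (hab : G.Adj a b)
    (ha : a ∉ matchedVerts s) (hb : b ∉ matchedVerts s) :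
    G.IsEdgeMatching (insert s(a, b) s) := by
  have hfree : ∀ x ∈ s(a, b), ∀ f ∈ s, x ∉ f := by
    rintro x hx f hf hxf
    obtain rfl | rfl := Sym2.mem_iff.mp hx
    exacts [ha ⟨f, hf, hxf⟩, hb ⟨f, hf, hxf⟩]
  exact ⟨insert_subset hab h.1, h.2.insert fun f hf _ =>
    ⟨fun x hx => hfree x hx f hf, fun x hxf hx => hfree x hx f hf hxf⟩⟩

lemma IsEdgeMatching.swap (h : G.IsEdgeMatching s) {a b c : V} (hab : s(a, b) ∈ s)
    (hac : G.Adj a c) (hc : c ∉ matchedVerts s) :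
    G.IsEdgeMatching (insert s(a, c) (s \ {s(a, b)})) := by
  refine (h.subset sdiff_subset).insert_edge hac ?_ fun ⟨f, hf, hcf⟩ => hc ⟨f, hf.1, hcf⟩
  rintro ⟨f, hf, haf⟩
  exact hf.2 (h.eq_of_mem hf.1 hab haf (Sym2.mem_mk_left a b))

lemma IsEdgeMatching.notMem_matchedVerts_swap (h : G.IsEdgeMatching s) {a b c : V}
    (hab : s(a, b) ∈ s) (hc : c ∉ matchedVerts s) :
    b ∉ matchedVerts (insert s(a, c) (s \ {s(a, b)})) := by
  rintro ⟨f, hf, hbf⟩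
  obtain rfl | ⟨hf, hfab⟩ := hf
  · obtain rfl | rfl := Sym2.mem_iff.mp hbf
    · exact G.irrefl (h.1 hab)
    · exact hc ⟨_, hab, Sym2.mem_mk_right _ _⟩
  · exact hfab (h.eq_of_mem hf hab hbf (Sym2.mem_mk_right a b))

lemma matchedVerts_swap_subset {a b c : V} (hab : s(a, b) ∈ s) :
    matchedVerts (insert s(a, c) (s \ {s(a, b)})) ⊆ insert c (matchedVerts s) := by
  rintro x ⟨f, rfl | ⟨hf, -⟩, hxf⟩
  · obtain rfl | rfl := Sym2.mem_iff.mp hxf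
    exacts [mem_insert_of_mem _ ⟨_, hab, Sym2.mem_mk_left _ _⟩, mem_insert _ _]
  · exact mem_insert_of_mem _ ⟨f, hf, hxf⟩

lemma IsEdgeMatching.ncard_matchedVerts [Finite V] (h : G.IsEdgeMatching s) :
    (matchedVerts s).ncard = 2 * s.ncard := by
  induction s, s.toFinite using Set.Finite.induction_on with
  | empty => simp [matchedVerts]
  | @insert e t he _ ih =>
    have hins := h.subset (subset_insert e t)
    obtain ⟨a, b⟩ := e
    have hab : a ≠ b := G.ne_of_adj (h.1 (mem_insert _ _))
    have hdisj : Disjoint {x | x ∈ s(a, b)} (matchedVerts t) := by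
      refine Set.disjoint_left.mpr fun x hx hx' => he ?_
      obtain ⟨f, hf, hxf⟩ := hx'
      rw [h.eq_of_mem (mem_insert _ _) (mem_insert_of_mem _ hf) hx hxf]
      exact hf
    have hpair : {x | x ∈ s(a, b)} = {a, b} := by ext; simp
    rw [matchedVerts_insert, ncard_union_eq hdisj, hpair, ncard_pair hab, ih hins,
      ncard_insert_of_notMem he]
    ring

lemma IsEdgeMatching.even_ncard_matchedVerts_inter [Finite V] (h : G.IsEdgeMatching s)
    {D : Set V} (hD : ∀ e ∈ s, ∀ x ∈ e, ∀ y ∈ e, x ∈ D → y ∈ D) :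
    Even (matchedVerts s ∩ D).ncard := by
  have hsep : matchedVerts s ∩ D = matchedVerts {e ∈ s | ∃ x ∈ e, x ∈ D} := by
    ext x
    constructor
    · rintro ⟨⟨e, he, hxe⟩, hxD⟩
      exact ⟨e, ⟨he, x, hxe, hxD⟩, hxe⟩
    · rintro ⟨e, ⟨he, y, hye, hyD⟩, hxe⟩
      exact ⟨⟨e, he, hxe⟩, hD e he y hye x hxe hyD⟩
  rw [hsep, (h.subset (sep_subset _ _)).ncard_matchedVerts]
  exact even_two_mul _

lemma IsEdgeMatching.ncard_le_of_forall_exists_mem [Finite V] (h : G.IsEdgeMatching s)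
    {U : Set V} (hU : ∀ e ∈ s, ∃ x ∈ e, x ∈ U) : s.ncard ≤ U.ncard := by
  have hpick : ∀ e : Sym2 V, ∃ x ∈ e, e ∈ s → x ∈ U := by
    intro e
    by_cases he : e ∈ s
    · obtain ⟨x, hxe, hxU⟩ := hU e he
      exact ⟨x, hxe, fun _ => hxU⟩
    · exact ⟨e.out.1, Sym2.out_fst_mem e, fun h => absurd h he⟩
  choose f hfe hfU using hpick
  exact ncard_le_ncard_of_injOn f hfU
    fun e he e' he' hee' => h.eq_of_mem he he' (hfe e) (hee' ▸ hfe e')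

def IsMaximumEdgeMatching (G : SimpleGraph V) (s : Set (Sym2 V)) : Prop :=
  G.IsEdgeMatching s ∧ s.ncard = matchingNumber G

section Finite

variable [Finite V]

lemma setOf_ncard_isEdgeMatching_bddAbove (G : SimpleGraph V) :
    BddAbove {n | ∃ s : Set (Sym2 V), s ⊆ G.edgeSet ∧
      (s.Pairwise fun e f => ∀ x, x ∈ e → x ∉ f) ∧ s.ncard = n} :=
  ⟨G.edgeSet.ncard, fun _ ⟨_, hs, _, hn⟩ => hn ▸ ncard_le_ncard hs⟩

lemma IsEdgeMatching.ncard_le_matchingNumber (h : G.IsEdgeMatching s) :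
    s.ncard ≤ matchingNumber G :=
  le_csSup (setOf_ncard_isEdgeMatching_bddAbove G) ⟨s, h.1, h.2, rfl⟩

lemma exists_isMaximumEdgeMatching (G : SimpleGraph V) :
    ∃ s, G.IsMaximumEdgeMatching s := by
  have hbdd := setOf_ncard_isEdgeMatching_bddAbove G
  obtain ⟨s, hs, hpw, hn⟩ := Nat.sSup_mem (by exact ⟨0, ∅, by simp⟩) hbdd
  exact ⟨s, ⟨hs, hpw⟩, hn⟩

lemma IsMaximumEdgeMatching.not_adj (h : G.IsMaximumEdgeMatching s) {a b : V}
    (ha : a ∉ matchedVerts s) (hb : b ∉ matchedVerts s) : ¬ G.Adj a b := fun hab => by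
  have hlarger := (h.1.insert_edge hab ha hb).ncard_le_matchingNumber
  rw [ncard_insert_of_notMem fun hs => ha ⟨_, hs, Sym2.mem_mk_left a b⟩, h.2] at hlarger
  omega

lemma IsMaximumEdgeMatching.swap (h : G.IsMaximumEdgeMatching s) {a b c : V}
    (hab : s(a, b) ∈ s) (hac : G.Adj a c) (hc : c ∉ matchedVerts s) :
    G.IsMaximumEdgeMatching (insert s(a, c) (s \ {s(a, b)})) := by
  refine ⟨h.1.swap hab hac hc, ?_⟩
  rw [ncard_insert_of_notMem fun hs => hc ⟨_, hs.1, Sym2.mem_mk_right a c⟩,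
    ncard_sdiff_singleton_add_one hab, h.2]

/-- `M'` is `M` switched along the `M`/`N`-alternating path starting at `w`. The induction follows
the path: moving `N` onto the first edge `xw` shortens the rest of the path by two edges. -/
theorem IsMaximumEdgeMatching.exists_of_mem_of_notMem {M N : Set (Sym2 V)}
    (hM : G.IsMaximumEdgeMatching M) (hN : G.IsMaximumEdgeMatching N) {w : V}
    (hwM : w ∈ matchedVerts M) (hwN : w ∉ matchedVerts N) :
    ∃ M' z, G.IsMaximumEdgeMatching M' ∧ w ∉ matchedVerts M' ∧
      matchedVerts M' ⊆ insert z (matchedVerts M) ∧ M ∩ N ⊆ M' := by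
  induction hn : (N \ M).ncard using Nat.strong_induction_on generalizing N w with
  | _ n ih =>
  obtain ⟨e, heM, hwe⟩ := hwM
  obtain ⟨x, rfl⟩ := Sym2.mem_iff_exists.mp hwe
  rw [Sym2.eq_swap] at heM
  have hwx : G.Adj w x := hM.1.1 (Sym2.eq_swap ▸ heM)
  have hxN : x ∈ matchedVerts N := by
    by_contra hxN
    exact hN.not_adj hwN hxN hwx
  obtain ⟨f, hfN, hxf⟩ := hxN
  obtain ⟨y, rfl⟩ := Sym2.mem_iff_exists.mp hxf
  have hxy : G.Adj x y := hN.1.1 hfN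
  have hyN : y ∈ matchedVerts N := ⟨_, hfN, Sym2.mem_mk_right x y⟩
  have hxwN : s(x, w) ∉ N := fun h => hwN ⟨_, h, Sym2.mem_mk_right x w⟩
  have hxyM : s(x, y) ∉ M := fun h =>
    hwN (Sym2.congr_right.mp (hM.1.eq_of_mem heM h (Sym2.mem_mk_left _ _) (Sym2.mem_mk_left _ _))
      ▸ hyN)
  by_cases hyM : y ∈ matchedVerts M
  · have hN₁ := hN.swap hfN hwx.symm hwN
    have hlt : (insert s(x, w) (N \ {s(x, y)}) \ M).ncard < n := by
      rw [← hn]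
      refine (ncard_le_ncard ?_).trans_lt (ncard_sdiff_singleton_lt_of_mem ⟨hfN, hxyM⟩)
      rintro g ⟨rfl | hg, hgM⟩
      exacts [absurd heM hgM, ⟨⟨hg.1, hgM⟩, hg.2⟩]
    obtain ⟨M₁, z, hM₁, hyM₁, hM₁z, hMN₁⟩ :=
      ih _ hlt hN₁ hyM (hN.1.notMem_matchedVerts_swap hfN hwN) rfl
    have hxwM₁ : s(x, w) ∈ M₁ := hMN₁ ⟨heM, mem_insert _ _⟩
    refine ⟨_, z, hM₁.swap hxwM₁ hxy hyM₁, hM₁.1.notMem_matchedVerts_swap hxwM₁ hyM₁,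
      (matchedVerts_swap_subset hxwM₁).trans (insert_subset (mem_insert_of_mem _ hyM) hM₁z),
      ?_⟩
    rintro g ⟨hgM, hgN⟩
    refine mem_insert_of_mem _ ⟨hMN₁ ⟨hgM, mem_insert_of_mem _ ⟨hgN, ?_⟩⟩, ?_⟩
    · rintro rfl; exact hxyM hgM
    · rintro rfl; exact hxwN hgN
  · refine ⟨_, y, hM.swap heM hxy hyM, hM.1.notMem_matchedVerts_swap heM hyM,
      matchedVerts_swap_subset heM, ?_⟩
    rintro g ⟨hgM, hgN⟩
    exact mem_insert_of_mem _ ⟨hgM, by rintro rfl; exact hxwN hgN⟩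

/-- Gallai's lemma. With `u`, `v` at minimal distance, the neighbour `w` of `u` on a shortest path
is covered by `M` but missed by some maximum `N`; switching `M` along the alternating path from `w`
gives a maximum matching missing `w` and one of `u`, `v`, both closer to `w`. -/
theorem IsMaximumEdgeMatching.eq_of_reachable
    (hB : ∀ v, ∃ N, G.IsMaximumEdgeMatching N ∧ v ∉ matchedVerts N)
    {M : Set (Sym2 V)} (hM : G.IsMaximumEdgeMatching M) {u v : V}
    (hu : u ∉ matchedVerts M) (hv : v ∉ matchedVerts M) (huv : G.Reachable u v) : u = v := by
  induction hd : G.dist u v using Nat.strong_induction_on generalizing M u v with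
  | _ d ih =>
  by_cases heq : u = v
  · exact heq
  obtain ⟨p, hp⟩ := huv.exists_walk_length_eq_dist
  cases p with
  | nil => rfl
  | @cons _ w _ huw q =>
  have hwM : w ∈ matchedVerts M := by
    by_contra hwM
    exact hM.not_adj hu hwM huw
  obtain ⟨N, hN, hwN⟩ := hB w
  obtain ⟨M', z, hM', hwM', hM'z, -⟩ := hM.exists_of_mem_of_notMem hN hwM hwN
  have hnot_mem {x : V} (hx : x ∉ matchedVerts M) (hxz : x ≠ z) : x ∉ matchedVerts M' :=
    fun h => (hM'z h).elim hxz hx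
  by_cases huz : u = z
  · subst huz
    have hdist : G.dist w v < d := by
      have := dist_le q
      simp only [Walk.length_cons] at hp
      omega
    exact absurd (ih _ hdist hM' hwM' (hnot_mem hv (Ne.symm heq)) q.reachable rfl ▸ hwM) hv
  · exact absurd huw (hM'.not_adj (hnot_mem hu huz) hwM')

end Finite

section Components

variable {R : Set V} {C C' : (G.induce R).ConnectedComponent} {x y : V}

lemma mem_image_supp_of_adj (hx : x ∈ Subtype.val '' C.supp) (hy : y ∈ R) (hxy : G.Adj x y) :
    y ∈ Subtype.val '' C.supp := by
  obtain ⟨x, hxC, rfl⟩ := hx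
  exact ⟨⟨y, hy⟩, C.mem_supp_of_adj_mem_supp hxC (by simpa using hxy), rfl⟩

lemma eq_of_mem_image_supp (hC : x ∈ Subtype.val '' C.supp) (hC' : x ∈ Subtype.val '' C'.supp) :
    C = C' := by
  obtain ⟨x, hxC, rfl⟩ := hC
  obtain ⟨x', hxC', hxx'⟩ := hC'
  rw [← Subtype.ext hxx'] at hxC
  exact ((ConnectedComponent.mem_supp_iff _ _).mp hxC).symm.trans
    ((ConnectedComponent.mem_supp_iff _ _).mp hxC')

lemma reachable_of_mem_image_supp (hx : x ∈ Subtype.val '' C.supp)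
    (hy : y ∈ Subtype.val '' C.supp) : G.Reachable x y := by
  obtain ⟨x, hxC, rfl⟩ := hx
  obtain ⟨y, hyC, rfl⟩ := hy
  exact (C.reachable_of_mem_supp hxC hyC).map (Embedding.induce R).toHom

end Components

lemma IsEdgeMatching.two_mul_ncard_add_card_le [Finite V] {R : Set V}
    (ht : G.IsEdgeMatching t) (htR : matchedVerts t ⊆ R)
    (hodd : ∀ C : (G.induce R).ConnectedComponent, Odd C.supp.ncard) :
    2 * t.ncard + Nat.card (G.induce R).ConnectedComponent ≤ R.ncard := by
  have hexposed (C : (G.induce R).ConnectedComponent) :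
      ∃ x ∈ Subtype.val '' C.supp, x ∉ matchedVerts t := by
    by_contra! hcov
    have heven := ht.even_ncard_matchedVerts_inter (D := Subtype.val '' C.supp)
      fun e he x hx y hy hxD => by
        obtain rfl | hxy := eq_or_ne x y
        · exact hxD
        · exact mem_image_supp_of_adj hxD (htR ⟨e, he, hy⟩)
            (adj_of_mem_edgeSet (ht.1 he) hx hy hxy)
    rw [inter_eq_right.mpr hcov, ncard_image_of_injective _ Subtype.val_injective] at heven
    exact Nat.not_even_iff_odd.mpr (hodd C) heven
  choose f hfC hft using hexposed
  have hcard : Nat.card (G.induce R).ConnectedComponent ≤ (R \ matchedVerts t).ncard := by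
    rw [← ncard_univ]
    refine ncard_le_ncard_of_injOn f (fun C _ => ⟨?_, hft C⟩)
      fun C _ C' _ h => eq_of_mem_image_supp (hfC C) (h ▸ hfC C')
    obtain ⟨x, -, hx⟩ := hfC C
    exact hx ▸ x.2
  have hsplit := ncard_sdiff_add_ncard_of_subset htR
  rw [ht.ncard_matchedVerts] at hsplit
  omega

structure IsTutteBergeCertificate (G : SimpleGraph V) (U R S : Set V) : Prop where
  disjoint_UR : Disjoint U R
  disjoint_US : Disjoint U S
  disjoint_RS : Disjoint R S
  union_eq_univ : U ∪ R ∪ S = univ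
  odd_ncard_supp : ∀ C : (G.induce R).ConnectedComponent, Odd C.supp.ncard
  three_le_ncard_supp : ∀ C : (G.induce R).ConnectedComponent, 3 ≤ C.supp.ncard
  not_adj_of_mem_S : ∀ u ∈ S, ∀ v ∈ S, ¬ G.Adj u v
  mem_U_of_adj : ∀ u ∈ S, ∀ v, G.Adj u v → v ∈ U

namespace IsTutteBergeCertificate

variable {U R S : Set V} (h : G.IsTutteBergeCertificate U R S)

include h

lemma ncard_setOf_odd :
    {C : (G.induce R).ConnectedComponent | Odd C.supp.ncard}.ncard =
      Nat.card (G.induce R).ConnectedComponent := by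
  rw [← ncard_univ]
  exact congrArg ncard (eq_univ_of_forall h.odd_ncard_supp)

lemma exists_adj {x : V} (hx : x ∈ R) : ∃ y, G.Adj x y := by
  let C := (G.induce R).connectedComponentMk ⟨x, hx⟩
  obtain ⟨y, hyC, hyx⟩ := exists_ne_of_one_lt_ncard (by linarith [h.three_le_ncard_supp C])
    (⟨x, hx⟩ : R)
  obtain ⟨p⟩ := C.reachable_of_mem_supp rfl hyC
  exact ⟨_, by simpa using p.adj_snd (p.not_nil_of_ne hyx.symm)⟩

lemma mem_R_of_forall_notMem_U {e : Sym2 V} (he : e ∈ G.edgeSet) (hU : ∀ x ∈ e, x ∉ U) :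
    ∀ x ∈ e, x ∈ R := by
  intro x hx
  have hxS : x ∉ S := fun hxS =>
    hU _ (Sym2.other_mem hx) (h.mem_U_of_adj x hxS _ (by rwa [← mem_edgeSet, Sym2.other_spec]))
  have hx' : x ∈ U ∪ R ∪ S := h.union_eq_univ ▸ mem_univ x
  rcases hx' with (hxU | hxR) | hxS'
  exacts [absurd hxU (hU x hx), hxR, absurd hxS' hxS]

lemma two_mul_ncard_add_le [Finite V] {s : Set (Sym2 V)} (hs : G.IsEdgeMatching s) :
    2 * s.ncard + Nat.card (G.induce R).ConnectedComponent ≤ 2 * U.ncard + R.ncard := by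
  set s₂ := {e ∈ s | ∀ x ∈ e, x ∉ U}
  have hs₁ : (s \ s₂).ncard ≤ U.ncard := by
    refine (hs.subset sdiff_subset).ncard_le_of_forall_exists_mem fun e he => ?_
    by_contra! hU
    exact he.2 ⟨he.1, hU⟩
  have hs₂s : s₂ ⊆ s := sep_subset _ _
  have hs₂ := (hs.subset hs₂s).two_mul_ncard_add_card_le
    (fun x ⟨e, he, hxe⟩ => h.mem_R_of_forall_notMem_U (hs.1 he.1) he.2 x hxe) h.odd_ncard_supp
  have hsplit := ncard_sdiff_add_ncard_of_subset hs₂s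
  omega

end IsTutteBergeCertificate

section Support

variable [Finite V] (hB : ∀ v, ∃ N, G.IsMaximumEdgeMatching N ∧ v ∉ matchedVerts N)

include hB

lemma odd_ncard_supp_induce_support (C : (G.induce G.support).ConnectedComponent) :
    Odd C.supp.ncard := by
  induction C using ConnectedComponent.ind with | h u =>
  set D := Subtype.val '' ((G.induce G.support).connectedComponentMk u).supp
  obtain ⟨N, hN, huN⟩ := hB u
  have huD : u.1 ∈ D := ⟨u, rfl, rfl⟩
  have hND : matchedVerts N ∩ D = D \ {u.1} := by
    ext x
    constructor
    · rintro ⟨hxN, hxD⟩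
      exact ⟨hxD, fun hxu => huN (hxu ▸ hxN)⟩
    · rintro ⟨hxD, hxu⟩
      refine ⟨by_contra fun hxN => hxu ?_, hxD⟩
      exact hN.eq_of_reachable hB hxN huN (reachable_of_mem_image_supp hxD huD)
  have heven := hN.1.even_ncard_matchedVerts_inter (D := D) fun e he x hx y hy hxD => by
    obtain rfl | hxy := eq_or_ne x y
    · exact hxD
    · have hadj := adj_of_mem_edgeSet (hN.1.1 he) hx hy hxy
      exact mem_image_supp_of_adj hxD ⟨x, hadj.symm⟩ hadj
  have hcard := ncard_sdiff_singleton_add_one huD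
  rw [← hND, ncard_image_of_injective _ Subtype.val_injective] at hcard
  exact hcard ▸ heven.add_one

lemma ncard_support_le :
    G.support.ncard ≤
      2 * matchingNumber G + Nat.card (G.induce G.support).ConnectedComponent := by
  obtain ⟨M, hM⟩ := exists_isMaximumEdgeMatching G
  have hMsupp : matchedVerts M ⊆ G.support := fun _ hx => (mem_support G).mpr (hM.1.exists_adj hx)
  have hexposed : (G.support \ matchedVerts M).ncard ≤
      Nat.card (G.induce G.support).ConnectedComponent := by
    let T : Set G.support := {x | x.1 ∉ matchedVerts M}
    have hT : Subtype.val '' T = G.support \ matchedVerts M := by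
      ext x
      simp [T, and_comm]
    rw [← hT, ncard_image_of_injective _ Subtype.val_injective, ← ncard_univ]
    exact ncard_le_ncard_of_injOn (G.induce G.support).connectedComponentMk
      (fun _ _ => mem_univ _) fun x hx y hy hxy => Subtype.ext <|
        hM.eq_of_reachable hB hx hy ((ConnectedComponent.exact hxy).map (Embedding.induce _).toHom)
  have hsplit := ncard_sdiff_add_ncard_of_subset hMsupp
  rw [hM.1.ncard_matchedVerts, hM.2] at hsplit
  omega

end Support

lemma three_le_ncard_supp_induce_support [Finite V] {C : (G.induce G.support).ConnectedComponent}
    (hC : Odd C.supp.ncard) : 3 ≤ C.supp.ncard := by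
  induction C using ConnectedComponent.ind with | h u =>
  obtain ⟨v, huv⟩ := u.2
  have hv : (⟨v, u, huv.symm⟩ : G.support) ∈
      ((G.induce G.support).connectedComponentMk u).supp :=
    ConnectedComponent.mem_supp_of_adj_mem_supp _ rfl (by simpa using huv)
  have h2 : 1 < ((G.induce G.support).connectedComponentMk u).supp.ncard :=
    (one_lt_ncard_iff).mpr ⟨u, _, rfl, hv, fun h => huv.ne (congrArg Subtype.val h)⟩
  obtain ⟨k, hk⟩ := hC
  omega

lemma isTutteBergeCertificate_support [Finite V]
    (hB : ∀ v, ∃ N, G.IsMaximumEdgeMatching N ∧ v ∉ matchedVerts N) :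
    G.IsTutteBergeCertificate ∅ G.support G.supportᶜ where
  disjoint_UR := empty_disjoint _
  disjoint_US := empty_disjoint _
  disjoint_RS := disjoint_compl_right
  union_eq_univ := by simp
  odd_ncard_supp := odd_ncard_supp_induce_support hB
  three_le_ncard_supp C := three_le_ncard_supp_induce_support (odd_ncard_supp_induce_support hB C)
  not_adj_of_mem_S u hu v _ huv := hu ⟨v, huv⟩
  mem_U_of_adj u hu v huv := absurd ⟨v, huv⟩ hu

section DeleteIncidenceSet

variable {v : V}

lemma deleteIncidenceSet_lt {w : V} (hvw : G.Adj v w) : G.deleteIncidenceSet v < G := by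
  refine (G.deleteIncidenceSet_le v).lt_of_ne fun h => ?_
  have hvw' : (G.deleteIncidenceSet v).Adj v w := by rwa [h]
  exact (deleteIncidenceSet_adj.mp hvw').2.1 rfl

lemma matchingNumber_deleteIncidenceSet_lt [Finite V]
    (hv : ∀ N, G.IsMaximumEdgeMatching N → v ∈ matchedVerts N) :
    matchingNumber (G.deleteIncidenceSet v) < matchingNumber G := by
  obtain ⟨s, hs⟩ := exists_isMaximumEdgeMatching (G.deleteIncidenceSet v)
  have hvs : v ∉ matchedVerts s := by
    rintro ⟨e, he, hve⟩
    obtain ⟨y, rfl⟩ := Sym2.mem_iff_exists.mp hve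
    exact (deleteIncidenceSet_adj.mp (hs.1.1 he)).2.1 rfl
  have hsG := hs.1.mono (G.deleteIncidenceSet_le v)
  rw [← hs.2]
  exact hsG.ncard_le_matchingNumber.lt_of_ne fun heq => hvs (hv s ⟨hsG, heq⟩)

lemma IsTutteBergeCertificate.of_deleteIncidenceSet {U R S : Set V}
    (h : (G.deleteIncidenceSet v).IsTutteBergeCertificate U R S) (hv : v ∉ R) :
    G.IsTutteBergeCertificate (insert v U) R (S \ {v}) where
  disjoint_UR := disjoint_insert_left.mpr ⟨hv, h.disjoint_UR⟩
  disjoint_US := disjoint_insert_left.mpr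
    ⟨fun hv => hv.2 rfl, h.disjoint_US.mono_right sdiff_subset⟩
  disjoint_RS := h.disjoint_RS.mono_right sdiff_subset
  union_eq_univ := by
    refine eq_univ_of_forall fun x => ?_
    have hx : x ∈ U ∪ R ∪ S := h.union_eq_univ ▸ mem_univ x
    simp only [mem_union, mem_insert_iff, mem_sdiff, mem_singleton_iff] at hx ⊢
    tauto
  odd_ncard_supp := G.induce_deleteIncidenceSet_of_notMem hv ▸ h.odd_ncard_supp
  three_le_ncard_supp := G.induce_deleteIncidenceSet_of_notMem hv ▸ h.three_le_ncard_supp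
  not_adj_of_mem_S a ha b hb hab :=
    h.not_adj_of_mem_S a ha.1 b hb.1 (deleteIncidenceSet_adj.mpr ⟨hab, ha.2, hb.2⟩)
  mem_U_of_adj a ha b hab := by
    obtain rfl | hbv := eq_or_ne b v
    · exact mem_insert _ _
    · exact mem_insert_of_mem _
        (h.mem_U_of_adj a ha.1 b (deleteIncidenceSet_adj.mpr ⟨hab, ha.2, hbv⟩))

end DeleteIncidenceSet

theorem exists_isTutteBergeCertificate [Finite V] (G : SimpleGraph V) :
    ∃ U R S, G.IsTutteBergeCertificate U R S ∧
      2 * U.ncard + R.ncard ≤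
        2 * matchingNumber G + Nat.card (G.induce R).ConnectedComponent := by
  induction G using WellFoundedLT.induction with
  | _ G ih =>
  by_cases hB : ∀ v, ∃ N, G.IsMaximumEdgeMatching N ∧ v ∉ matchedVerts N
  · exact ⟨∅, G.support, G.supportᶜ, isTutteBergeCertificate_support hB,
      by simpa using ncard_support_le hB⟩
  obtain ⟨v, hv⟩ : ∃ v, ∀ N, G.IsMaximumEdgeMatching N → v ∈ matchedVerts N := by
    simpa using hB
  obtain ⟨M, hM⟩ := exists_isMaximumEdgeMatching G
  obtain ⟨w, hvw⟩ := hM.1.exists_adj (hv M hM)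
  obtain ⟨U, R, S, hc, hbound⟩ := ih _ (deleteIncidenceSet_lt hvw)
  have hvR : v ∉ R := fun hvR => by
    obtain ⟨y, hvy⟩ := hc.exists_adj hvR
    exact (deleteIncidenceSet_adj.mp hvy).2.1 rfl
  have hν := matchingNumber_deleteIncidenceSet_lt hv
  have hU := ncard_insert_le v U
  rw [G.induce_deleteIncidenceSet_of_notMem hvR] at hbound
  exact ⟨insert v U, R, S \ {v}, hc.of_deleteIncidenceSet hvR, by omega⟩

end SimpleGraph


/-- Tutte–Berge style characterization: `ν(G) ≤ m` iff `V(G)` partitions into pairwise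
disjoint sets `U`, `R`, `S` such that every connected component of `G[R]` has odd size at
least 3, `S` is independent, all neighbors of vertices of `S` lie in `U`, and
`2|U| + |R| − odd(G[R]) ≤ 2m`. -/
theorem stmt_13 {V : Type*} [Fintype V] (G : SimpleGraph V) (m : ℤ) :
    (matchingNumber G : ℤ) ≤ m ↔
    ∃ U R S : Set V,
      Disjoint U R ∧ Disjoint U S ∧ Disjoint R S ∧ U ∪ R ∪ S = Set.univ ∧
      (∀ C : (G.induce R).ConnectedComponent, Odd C.supp.ncard ∧ 3 ≤ C.supp.ncard) ∧
      (∀ u ∈ S, ∀ v ∈ S, ¬ G.Adj u v) ∧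
      (∀ u ∈ S, ∀ v : V, G.Adj u v → v ∈ U) ∧
      2 * (U.ncard : ℤ) + (R.ncard : ℤ) -
        ({C : (G.induce R).ConnectedComponent | Odd C.supp.ncard}.ncard : ℤ) ≤ 2 * m := by
  constructor
  · intro hm
    obtain ⟨U, R, S, hc, hbound⟩ := SimpleGraph.exists_isTutteBergeCertificate G
    refine ⟨U, R, S, hc.disjoint_UR, hc.disjoint_US, hc.disjoint_RS, hc.union_eq_univ,
      fun C => ⟨hc.odd_ncard_supp C, hc.three_le_ncard_supp C⟩, hc.not_adj_of_mem_S,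
      hc.mem_U_of_adj, ?_⟩
    rw [hc.ncard_setOf_odd]
    omega
  · rintro ⟨U, R, S, hUR, hUS, hRS, hunion, hodd, hS, hSU, hbound⟩
    have hc : G.IsTutteBergeCertificate U R S := ⟨hUR, hUS, hRS, hunion,
      fun C => (hodd C).1, fun C => (hodd C).2, hS, hSU⟩
    obtain ⟨M, hM⟩ := SimpleGraph.exists_isMaximumEdgeMatching G
    have hM_le := hc.two_mul_ncard_add_le hM.1
    rw [hc.ncard_setOf_odd] at hbound
    rw [← hM.2]
    omega
end

section
/- Let G be a finite simple graph, let C ⊆ V(G) be a vertex cover of G, and let S = V(G) \ C. If a finite simple graph H is a minor of G, then there exists S' ⊆ S with |S'| ≤ |V(H)| + |C| · (Δ(H) + 1) such that H is a minor of the induced subgraph G[C ∪ S'], where Δ(H) denotes the maximum degree of H. -/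
/-!
Shrink each branch set `φ v` of an `H`-model to a connected `B v ⊆ φ v` that still contains a
base point of `φ v` and, for each neighbour `u` of `v`, the endpoint in `φ v` of one chosen
`G`-edge between `φ v` and `φ u`. Such a `B v` is grown one terminal at a time, each time adding
the segment of a path from the new terminal up to the part already built; since `C` is a vertex
cover, vertices outside `C` never follow each other on that segment, so each connector vertex
outside `C` can be charged to a vertex of `B v ∩ C`. The vertices outside `C` that we keep are
therefore the base points (`|V(H)|`), the chosen edge endpoints outside `C` (each is the far end
of a chosen edge from some `c ∈ C`, at most `Δ(H)` per `c`) and the connectors (at most `|C|`).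
-/

open Function SimpleGraph

theorem Set.ncard_iUnion_le_ncard_iUnion_of_pairwise_disjoint {α ι : Type*} [Finite α] [Fintype ι]
    {s t : ι → Set α} (ht : Pairwise (Disjoint on t)) (h : ∀ i, (s i).ncard ≤ (t i).ncard) :
    (⋃ i, s i).ncard ≤ (⋃ i, t i).ncard := by
  rw [Set.ncard_iUnion_of_finite (fun i => toFinite _) ht, finsum_eq_sum_of_fintype]
  calc (⋃ i, s i).ncard ≤ ∑ i, (s i).ncard := by simpa using Finset.set_ncard_biUnion_le .univ s
    _ ≤ ∑ i, (t i).ncard := Finset.sum_le_sum fun i _ => h i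

namespace SimpleGraph

variable {V : Type*} {G : SimpleGraph V}

theorem exists_isPath_support_subset_of_connected_induce {B : Set V}
    (hB : (G.induce B).Connected) {x y : V} (hx : x ∈ B) (hy : y ∈ B) :
    ∃ p : G.Walk x y, p.IsPath ∧ ∀ z ∈ p.support, z ∈ B := by
  classical
  obtain ⟨q⟩ := hB.preconnected ⟨x, hx⟩ ⟨y, hy⟩
  refine ⟨q.toPath.1.map (Embedding.induce B).toHom,
    q.toPath.2.map Subtype.val_injective, fun z hz => ?_⟩
  obtain ⟨z, -, rfl⟩ := List.mem_map.1 ((Walk.support_map _ _) ▸ hz)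
  exact z.2

theorem Connected.induce_preimage_val {A B : Set V} (hBA : B ⊆ A) (h : (G.induce B).Connected) :
    ((G.induce A).induce ((↑) ⁻¹' B : Set A)).Connected :=
  (Iso.connected_iff ⟨(Equiv.subtypeSubtypeEquivSubtype fun hx => hBA hx).symm, Iff.rfl⟩).1 h

variable [Finite V] {C : Set V}

theorem IsVertexCover.exists_connector (hC : G.IsVertexCover C) {D : Set V} {x y : V}
    (p : G.Walk x y) (hp : p.IsPath) (hx : x ∉ D) (hy : y ∈ D) :
    ∃ P : Set V, x ∈ P ∧ P ⊆ {z | z ∈ p.support} ∧ Disjoint P D ∧ (G.induce P).Connected ∧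
      (∃ u ∈ P, ∃ w ∈ D, G.Adj u w) ∧ ((P \ {x}) \ C).ncard ≤ (P ∩ C).ncard := by
  induction p with
  | nil => exact absurd hy hx
  | @cons x z y hxz q ih =>
    rw [Walk.cons_isPath_iff] at hp
    by_cases hzD : z ∈ D
    · refine ⟨{x}, rfl, by simp, by simpa using hx, by simp, ⟨x, rfl, z, hzD, hxz⟩, by simp⟩
    obtain ⟨P, hzP, hPq, hPD, hPconn, hPadj, hPcard⟩ := ih hp.1 hzD hy
    have hxP : x ∉ P := fun h => hp.2 (hPq h)
    refine ⟨insert x P, Set.mem_insert x P, ?_, ?_, ?_, ?_, ?_⟩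
    · exact Set.insert_subset (by simp) (hPq.trans fun w hw => by simp_all)
    · exact Set.disjoint_insert_left.2 ⟨hx, hPD⟩
    · rw [Set.insert_eq, Set.union_comm]
      exact connected_induce_union hPconn.preconnected (by simp) hzP rfl hxz.symm
    · obtain ⟨u, hu, w, hw, huw⟩ := hPadj
      exact ⟨u, Set.mem_insert_of_mem x hu, w, hw, huw⟩
    · rw [Set.insert_sdiff_self_of_notMem hxP]
      by_cases hxC : x ∈ C
      · rw [Set.insert_inter_of_mem hxC, Set.ncard_insert_of_notMem (fun h => hxP h.1)]
        have := Set.pred_ncard_le_ncard_sdiff_singleton (P \ C) z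
        rw [Set.sdiff_sdiff_comm] at hPcard
        omega
      · have hzC : z ∈ C := (hC hxz).resolve_left hxC
        rw [Set.insert_inter_of_notMem hxC]
        rwa [Set.sdiff_sdiff_comm, Set.sdiff_singleton_eq_self fun h => h.2 hzC] at hPcard

theorem IsVertexCover.exists_connected_superset (hC : G.IsVertexCover C) {B T : Set V}
    (hB : (G.induce B).Connected) (hTB : T ⊆ B) (hT : T.Nonempty) :
    ∃ B' ⊆ B, T ⊆ B' ∧ (G.induce B').Connected ∧ ((B' \ T) \ C).ncard ≤ (B' ∩ C).ncard := by
  induction T, T.toFinite using Set.Finite.induction_on with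
  | empty => exact absurd hT Set.not_nonempty_empty
  | @insert a T haT _ ih =>
    have haB : a ∈ B := hTB (Set.mem_insert a T)
    obtain rfl | hT := T.eq_empty_or_nonempty
    · exact ⟨{a}, by simpa using haB, by simp, by simp, by simp⟩
    obtain ⟨B₀, hB₀B, hTB₀, hB₀conn, hB₀card⟩ := ih ((Set.subset_insert a T).trans hTB) hT
    by_cases haB₀ : a ∈ B₀
    · refine ⟨B₀, hB₀B, Set.insert_subset haB₀ hTB₀, hB₀conn, le_trans ?_ hB₀card⟩
      exact Set.ncard_le_ncard (by gcongr; exact Set.subset_insert a T)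
    obtain ⟨y, hyT⟩ := hT
    obtain ⟨p, hp, hpB⟩ :=
      exists_isPath_support_subset_of_connected_induce hB haB (hB₀B (hTB₀ hyT))
    obtain ⟨P, haP, hPp, hPB₀, hPconn, ⟨u, hu, w, hw, huw⟩, hPcard⟩ :=
      hC.exists_connector p hp haB₀ (hTB₀ hyT)
    refine ⟨B₀ ∪ P, Set.union_subset hB₀B fun z hz => hpB z (hPp hz),
      Set.insert_subset (Or.inr haP) (hTB₀.trans Set.subset_union_left),
      connected_induce_union hB₀conn.preconnected hPconn.preconnected hw hu huw.symm, ?_⟩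
    have hsplit : ((B₀ ∪ P) \ insert a T) \ C ⊆ ((B₀ \ T) \ C) ∪ ((P \ {a}) \ C) := by
      intro z
      simp only [Set.mem_sdiff, Set.mem_union, Set.mem_insert_iff, Set.mem_singleton_iff]
      tauto
    have hdisjC : Disjoint (B₀ ∩ C) (P ∩ C) :=
      hPB₀.symm.mono Set.inter_subset_left Set.inter_subset_left
    calc (((B₀ ∪ P) \ insert a T) \ C).ncard
        ≤ ((B₀ \ T) \ C).ncard + ((P \ {a}) \ C).ncard :=
          (Set.ncard_le_ncard hsplit).trans (Set.ncard_union_le _ _)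
      _ ≤ (B₀ ∩ C).ncard + (P ∩ C).ncard := add_le_add hB₀card hPcard
      _ = ((B₀ ∪ P) ∩ C).ncard := by
          rw [Set.union_inter_distrib_right, Set.ncard_union_eq hdisjC]

end SimpleGraph

section MinorModel

variable {V W : Type*} {G : SimpleGraph V} {H : SimpleGraph W} {φ : W → Set V}

theorem IsMinorModel.induce (hφ : IsMinorModel G H φ) {U : Set V} (hU : ∀ v, φ v ⊆ U) :
    IsMinorModel (G.induce U) H fun v => (↑) ⁻¹' φ v := by
  obtain ⟨hconn, hadj, hdisj⟩ := hφ
  refine ⟨fun v => (hconn v).induce_preimage_val (hU v), fun u v huv => ?_,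
    fun u v huv => (hdisj u v huv).preimage _⟩
  obtain ⟨x, hx, y, hy, hxy⟩ := hadj u v huv
  exact ⟨⟨x, hU u hx⟩, hx, ⟨y, hU v hy⟩, hy, hxy⟩

theorem IsMinorModel.exists_adj_choice (hφ : IsMinorModel G H φ) :
    ∃ f : W → W → V, (∀ u v, f u v ∈ φ u) ∧ ∀ u v, H.Adj u v → G.Adj (f u v) (f v u) := by
  classical
  -- orienting each edge by a linear order makes both of its ends read off the same choice
  let _ : LinearOrder W := IsWellOrder.linearOrder WellOrderingRel
  choose a ha b hb hab using hφ.2.1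
  choose pt hpt using fun v => Set.nonempty_coe_sort.1 (hφ.1 v).nonempty
  refine ⟨fun u v => if h : H.Adj u v then (if u < v then a u v h else b v u h.symm) else pt u,
    fun u v => ?_, fun u v huv => ?_⟩
  · by_cases h : H.Adj u v
    · by_cases huv : u < v <;> simp [h, huv, ha, hb]
    · simp [h, hpt]
  · rcases lt_or_gt_of_ne huv.ne with h | h
    · simpa [huv, huv.symm, h, h.not_gt] using hab u v huv
    · simpa [huv, huv.symm, h, h.not_gt] using (hab v u huv.symm).symm

/-- For `f` as in `IsMinorModel.exists_adj_choice`, `f v v` serves as a base point of the branch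
set of `v` and `f v u` is the end in it of the edge chosen towards `u`. -/
def terminals (H : SimpleGraph W) (f : W → W → V) (v : W) : Set V :=
  insert (f v v) (f v '' H.neighborSet v)

variable [Finite V] {C : Set V} {f : W → W → V} {Δ : ℕ}

theorem SimpleGraph.IsVertexCover.ncard_iUnion_image_neighborSet_sdiff_le [Finite W]
    (hC : G.IsVertexCover C) (hφ : Pairwise (Disjoint on φ)) (hfφ : ∀ u v, H.Adj u v → f u v ∈ φ u)
    (hf : ∀ u v, H.Adj u v → G.Adj (f u v) (f v u)) (hΔ : ∀ v, (H.neighborSet v).ncard ≤ Δ) :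
    ((⋃ v, f v '' H.neighborSet v) \ C).ncard ≤ C.ncard * Δ := by
  let far : V → Set V := fun c => {x | ∃ u v, H.Adj u v ∧ f u v = c ∧ f v u = x}
  have hfar (c : V) : (far c).ncard ≤ Δ := by
    by_cases hc : ∃ w, c ∈ φ w
    · obtain ⟨w, hw⟩ := hc
      have hsub : far c ⊆ (f · w) '' H.neighborSet w := by
        rintro _ ⟨u, v, huv, rfl, rfl⟩
        obtain rfl : u = w := by_contra fun h => Set.disjoint_left.1 (hφ h) (hfφ u v huv) hw
        exact ⟨v, huv, rfl⟩
      exact (Set.ncard_le_ncard hsub).trans ((Set.ncard_image_le (Set.toFinite _)).trans (hΔ w))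
    · have : far c = ∅ := by
        refine Set.eq_empty_of_forall_notMem ?_
        rintro _ ⟨u, v, huv, rfl, -⟩
        exact hc ⟨u, hfφ u v huv⟩
      simp [this]
  have hsub : (⋃ v, f v '' H.neighborSet v) \ C ⊆ ⋃ c ∈ C.toFinite.toFinset, far c := by
    rintro _ ⟨hx, hxC⟩
    obtain ⟨v, u, hvu, rfl⟩ : ∃ v u, H.Adj v u ∧ f v u = _ := by simpa using hx
    have : f u v ∈ C := (hC (hf v u hvu)).resolve_left hxC
    simp only [Set.mem_iUnion, Set.Finite.mem_toFinset]
    exact ⟨f u v, this, u, v, hvu.symm, rfl, rfl⟩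
  calc ((⋃ v, f v '' H.neighborSet v) \ C).ncard
      ≤ ∑ c ∈ C.toFinite.toFinset, (far c).ncard :=
        (Set.ncard_le_ncard hsub).trans (Finset.set_ncard_biUnion_le _ _)
    _ ≤ C.toFinite.toFinset.card • Δ := Finset.sum_le_card_nsmul _ _ _ fun c _ => hfar c
    _ = C.ncard * Δ := by rw [Set.ncard_eq_toFinset_card C, smul_eq_mul]

theorem SimpleGraph.IsVertexCover.ncard_iUnion_sdiff_le [Fintype W] (hC : G.IsVertexCover C)
    {B : W → Set V} (hBdisj : Pairwise (Disjoint on B)) (hfB : ∀ u v, H.Adj u v → f u v ∈ B u)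
    (hf : ∀ u v, H.Adj u v → G.Adj (f u v) (f v u)) (hΔ : ∀ v, (H.neighborSet v).ncard ≤ Δ)
    (hB : ∀ v, ((B v \ terminals H f v) \ C).ncard ≤ (B v ∩ C).ncard) :
    ((⋃ v, B v) \ C).ncard ≤ Fintype.card W + C.ncard * (Δ + 1) := by
  have hsplit : (⋃ v, B v) \ C ⊆ (Set.range fun v => f v v) ∪
      ((⋃ v, f v '' H.neighborSet v) \ C) ∪ ⋃ v, (B v \ terminals H f v) \ C := by
    rintro x ⟨hx, hxC⟩
    obtain ⟨v, hxv⟩ := Set.mem_iUnion.1 hx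
    by_cases hxT : x ∈ terminals H f v
    · rcases hxT with rfl | hxN
      · exact Or.inl (Or.inl ⟨v, rfl⟩)
      · exact Or.inl (Or.inr ⟨Set.mem_iUnion.2 ⟨v, hxN⟩, hxC⟩)
    · exact Or.inr (Set.mem_iUnion.2 ⟨v, ⟨hxv, hxT⟩, hxC⟩)
  have hbase : (Set.range fun v => f v v).ncard ≤ Fintype.card W := by
    rw [← Set.image_univ, ← Nat.card_eq_fintype_card, ← Set.ncard_univ]
    exact Set.ncard_image_le (Set.toFinite _)
  have hends := hC.ncard_iUnion_image_neighborSet_sdiff_le hBdisj hfB hf hΔ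
  have hconnectors : (⋃ v, (B v \ terminals H f v) \ C).ncard ≤ C.ncard :=
    (Set.ncard_iUnion_le_ncard_iUnion_of_pairwise_disjoint (t := fun v => B v ∩ C)
      (fun u v huv => (hBdisj huv).mono Set.inter_subset_left Set.inter_subset_left)
      hB).trans (Set.ncard_le_ncard (Set.iUnion_subset fun v => Set.inter_subset_right))
  have := (Set.ncard_le_ncard hsplit).trans ((Set.ncard_union_le _ _).trans
    (add_le_add_left (Set.ncard_union_le _ _) _))
  rw [mul_add_one]
  omega

end MinorModel

/-- If `C` is a vertex cover of `G`, `S = V(G) \ C`, and `H` is a minor of `G`, then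
there is `S' ⊆ S` with `|S'| ≤ |V(H)| + |C| · (Δ(H) + 1)` such that `H` is a minor of
`G[C ∪ S']`, where `Δ(H) = ⨆ v, |N_H(v)|` is the maximum degree of `H`. -/
theorem stmt_15 {V W : Type*} [Fintype V] [Fintype W]
    (G : SimpleGraph V) (C : Set V)
    (hC : ∀ ⦃u v : V⦄, G.Adj u v → u ∈ C ∨ v ∈ C)
    (H : SimpleGraph W) (h : IsMinorOf H G) :
    ∃ S' ⊆ Cᶜ,
      S'.ncard ≤ Fintype.card W + C.ncard * ((⨆ v : W, (H.neighborSet v).ncard) + 1) ∧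
      IsMinorOf H (G.induce (C ∪ S')) := by
  obtain ⟨φ, hφ⟩ := h
  obtain ⟨f, hfφ, hf⟩ := hφ.exists_adj_choice
  choose B hBφ hTB hBconn hBcard using fun v =>
    IsVertexCover.exists_connected_superset hC (hφ.1 v) (T := terminals H f v)
      (Set.insert_subset (hfφ v v) (Set.image_subset_iff.2 fun u _ => hfφ v u))
      (Set.insert_nonempty _ _)
  have hBdisj : Pairwise (Disjoint on B) := fun u v huv => (hφ.2.2 u v huv).mono (hBφ u) (hBφ v)
  have hfB (u v : W) (huv : H.Adj u v) : f u v ∈ B u := hTB u (Or.inr ⟨v, huv, rfl⟩)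
  have hB : IsMinorModel G H B :=
    ⟨hBconn, fun u v huv => ⟨f u v, hfB u v huv, f v u, hfB v u huv.symm, hf u v huv⟩,
      fun u v huv => hBdisj huv⟩
  have hΔ (v : W) : (H.neighborSet v).ncard ≤ ⨆ v : W, (H.neighborSet v).ncard :=
    le_ciSup (f := fun v => (H.neighborSet v).ncard) (Set.finite_range _).bddAbove v
  refine ⟨(⋃ v, B v) \ C, Set.sdiff_subset_compl _ _,
    IsVertexCover.ncard_iUnion_sdiff_le hC hBdisj hfB hf hΔ hBcard, _, hB.induce fun v x hx => ?_⟩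
  exact (em (x ∈ C)).imp id fun hxC => ⟨Set.mem_iUnion.2 ⟨v, hx⟩, hxC⟩
end
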